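/- arXiv:0807.2620 — 3 statements merged into one kernel-verified Lean document; each statement's English description precedes it below -/
import Mathlib

section
/- For every nonzero P ∈ O[x]: the element P^S(θ) ∈ L satisfies v(P^S(θ)) ≥ 0 and its residue class in 𝔽_L equals R_λ(P)(γ̄); moreover v(P(θ) − P⁰(θ)) > H(P). -/
/-!
Common framework: a finite extension `K` of `ℚ_[p]` inside a fixed algebraic closure
`Om p := AlgebraicClosure ℚ_[p]`, its ring of integers `Oring p K` (the integral closure
of `ℤ_[p]` in `K`), the `ℚ`-valued valuation `w` on `Om p` extending the valuation of `K`
normalized by `w(K^×) = ℤ`, a fixed uniformizer `π`, and the whole Newton polygon /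
residual polynomial machinery of Montes–Guàrdia–Nart in order one.
-/

open Polynomial

open scoped Classical

set_option maxHeartbeats 1000000
set_option synthInstance.maxHeartbeats 1000000

noncomputable section

variable (p : ℕ) [Fact p.Prime]

/-- A fixed algebraic closure of `ℚ_[p]`. -/
abbrev Om : Type _ := AlgebraicClosure ℚ_[p]

/-- The ring of integers (integral closure of `ℤ_[p]`) of a subfield `K` of the
algebraic closure of `ℚ_[p]`. -/
def Oring (K : IntermediateField ℚ_[p] (Om p)) : Subring K :=
  letI : Algebra ℤ_[p] K :=
    ((algebraMap ℚ_[p] K).comp (PadicInt.Coe.ringHom)).toAlgebra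
  (integralClosure ℤ_[p] K).toSubring

/-- Extract the integer value of an element of `WithTop ℚ` (junk value `0`). -/
def zOf (q : WithTop ℚ) : ℤ :=
  if h : ∃ n : ℤ, q = ((n : ℚ) : WithTop ℚ) then h.choose else 0

/-- Extract the rational value (junk value `0` at `⊤`). -/
def qOf (q : WithTop ℚ) : ℚ := q.untopD 0

/-- Canonical map `WithTop ℤ → WithTop ℚ`. -/
def zq : WithTop ℤ → WithTop ℚ := WithTop.map fun n : ℤ => (n : ℚ)

/-- A finite extension `K` of `ℚ_[p]` inside the fixed algebraic closure, together with
the `ℚ ∪ {∞}`-valued additive valuation `w` on the algebraic closure which is the unique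
extension of the discrete valuation `v` of `K` normalized by `v(K^×) = ℤ`, and a fixed
uniformizer `π ∈ O`.  (The hypotheses pin `w` down uniquely: it is an additive valuation,
it is `ℤ`-valued and surjective onto `ℤ` on `K^×`, and it is proportional to the `p`-adic
valuation on `ℚ_[p]`.) -/
structure PadicCtx where
  K : IntermediateField ℚ_[p] (Om p)
  fd : FiniteDimensional ℚ_[p] K
  w : Om p → WithTop ℚ
  w_top : ∀ x, w x = ⊤ ↔ x = 0
  w_mul : ∀ x y, w (x * y) = w x + w y
  w_add : ∀ x y, min (w x) (w y) ≤ w (x + y)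
  w_Kint : ∀ x : K, x ≠ 0 → ∃ n : ℤ, w (x : Om p) = ((n : ℚ) : WithTop ℚ)
  w_Ksurj : ∀ n : ℤ, ∃ x : K, w (x : Om p) = ((n : ℚ) : WithTop ℚ)
  ePad : ℚ
  ePad_pos : 0 < ePad
  w_padic : ∀ x : ℚ_[p], x ≠ 0 →
    w (algebraMap ℚ_[p] (Om p) x) = (((x.valuation : ℚ) * ePad : ℚ) : WithTop ℚ)
  πO : Oring p K
  w_π : w ((πO : K) : Om p) = ((1 : ℚ) : WithTop ℚ)

namespace PadicCtx

variable {p} (C : PadicCtx p)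

/-! ### Basic facts about `w` needed to construct rings of integers -/

theorem w_zero : C.w 0 = ⊤ := (C.w_top 0).mpr rfl

theorem w_one : C.w 1 = 0 := by
  have h := C.w_mul 1 1
  rw [mul_one] at h
  have h1 : C.w 1 ≠ ⊤ := fun hh => one_ne_zero ((C.w_top 1).mp hh)
  rcases WithTop.ne_top_iff_exists.mp h1 with ⟨a, ha⟩
  rw [← ha] at h ⊢
  have : a = a + a := by exact_mod_cast h
  have : a = 0 := by linarith
  exact_mod_cast congrArg (fun x : ℚ => ((x : WithTop ℚ))) this

theorem w_negone : C.w (-1) = 0 := by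
  have h := C.w_mul (-1) (-1)
  rw [neg_mul_neg, one_mul, C.w_one] at h
  have h1 : C.w (-1) ≠ ⊤ := by
    intro hh
    have : (-1 : Om p) = 0 := (C.w_top (-1)).mp hh
    simpa using this
  rcases WithTop.ne_top_iff_exists.mp h1 with ⟨a, ha⟩
  rw [← ha] at h ⊢
  have h' : (0 : ℚ) = a + a := by exact_mod_cast h
  have : a = 0 := by linarith
  exact_mod_cast congrArg (fun x : ℚ => ((x : WithTop ℚ))) this

theorem w_neg (x : Om p) : C.w (-x) = C.w x := by
  have h := C.w_mul (-1) x
  rw [neg_one_mul, C.w_negone, zero_add] at h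
  exact h

/-! ### Rings of integers, maximal ideals, residue fields -/

/-- The ring of integers `O_L = {x ∈ L : w x ≥ 0}` of an intermediate field `L`. -/
def OL (L : IntermediateField ℚ_[p] (Om p)) : Subring (Om p) where
  carrier := {x | x ∈ L ∧ 0 ≤ C.w x}
  zero_mem' := ⟨zero_mem L, by rw [C.w_zero]; exact le_top⟩
  one_mem' := ⟨one_mem L, by rw [C.w_one]⟩
  add_mem' := fun {a b} ha hb =>
    ⟨add_mem ha.1 hb.1, le_trans (le_min ha.2 hb.2) (C.w_add a b)⟩
  mul_mem' := fun {a b} ha hb =>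
    ⟨mul_mem ha.1 hb.1, by rw [C.w_mul]; exact add_nonneg ha.2 hb.2⟩
  neg_mem' := fun {a} ha => ⟨neg_mem ha.1, by rw [C.w_neg]; exact ha.2⟩

theorem mem_OL {L : IntermediateField ℚ_[p] (Om p)} {x : Om p} :
    x ∈ C.OL L ↔ x ∈ L ∧ 0 ≤ C.w x := Iff.rfl

/-- The maximal ideal `m_L = {x ∈ O_L : w x > 0}` of the ring of integers of `L`. -/
def mOL (L : IntermediateField ℚ_[p] (Om p)) : Ideal ↥(C.OL L) where
  carrier := {x | 0 < C.w (x : Om p)}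
  zero_mem' := by
    show 0 < C.w ((0 : ↥(C.OL L)) : Om p)
    rw [show ((0 : ↥(C.OL L)) : Om p) = 0 from rfl, C.w_zero]
    exact lt_top_iff_ne_top.mpr (by simp)
  add_mem' := fun {a b} ha hb =>
    lt_of_lt_of_le (lt_min ha hb) (C.w_add _ _)
  smul_mem' := fun r x hx => by
    show 0 < C.w ((r * x : ↥(C.OL L)) : Om p)
    rw [show ((r * x : ↥(C.OL L)) : Om p) = (r : Om p) * (x : Om p) from rfl, C.w_mul]
    calc (0 : WithTop ℚ) < C.w (x : Om p) := hx
      _ ≤ C.w (r : Om p) + C.w (x : Om p) :=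
        le_add_of_nonneg_left ((C.mem_OL.mp r.2).2)

/-- The residue field `𝔽_L = O_L / m_L`. -/
abbrev resF (L : IntermediateField ℚ_[p] (Om p)) : Type _ := ↥(C.OL L) ⧸ C.mOL L

/-- Inclusion of rings of integers along an inclusion of fields. -/
def OLincl {L M : IntermediateField ℚ_[p] (Om p)} (hLM : L ≤ M) :
    ↥(C.OL L) →+* ↥(C.OL M) where
  toFun x := ⟨x, hLM (C.mem_OL.mp x.2).1, (C.mem_OL.mp x.2).2⟩
  map_one' := rfl
  map_mul' _ _ := rfl
  map_zero' := rfl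
  map_add' _ _ := rfl

/-- The induced map of residue fields. -/
def resMap {L M : IntermediateField ℚ_[p] (Om p)} (hLM : L ≤ M) :
    C.resF L →+* C.resF M :=
  Ideal.Quotient.lift (C.mOL L) ((Ideal.Quotient.mk (C.mOL M)).comp (C.OLincl hLM))
    (fun a ha => by
      simp only [RingHom.comp_apply]
      rw [Ideal.Quotient.eq_zero_iff_mem]
      exact ha)

/-- The residual degree `f(M/L) = [𝔽_M : 𝔽_L]`. -/
def resDeg {L M : IntermediateField ℚ_[p] (Om p)} (hLM : L ≤ M) : ℕ :=
  letI : Algebra (C.resF L) (C.resF M) := (C.resMap hLM).toAlgebra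
  Module.finrank (C.resF L) (C.resF M)

/-- The ramification index `e(M/K)` of `M` over the base field `K`: the least `n > 0`
such that `n • w(M^×) ⊆ ℤ` (recall `w(K^×) = ℤ`). -/
def ramE (M : IntermediateField ℚ_[p] (Om p)) : ℕ :=
  sInf {n | 0 < n ∧ ∀ x : Om p, x ∈ M → x ≠ 0 → ∃ k : ℤ, n • C.w x = ((k : ℚ) : WithTop ℚ)}

/-! ### Polynomials over the ring of integers; `φ`-adic developments -/

/-- Value of `w` on an element of the ring of integers of `K`. -/
def vO (x : ↥(Oring p C.K)) : WithTop ℚ := C.w (((x : C.K)) : Om p)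

/-- The Gauss valuation `v` of a polynomial: the minimum of the values of its
coefficients. -/
def vpol (g : Polynomial ↥(Oring p C.K)) : WithTop ℚ :=
  g.support.inf fun n => C.vO (g.coeff n)

/-- The `i`-th coefficient `a_i` of the `φ`-adic development `f = ∑ a_i φ^i`
(`deg a_i < deg φ`). -/
def phiCoeff (φ f : Polynomial ↥(Oring p C.K)) (i : ℕ) : Polynomial ↥(Oring p C.K) :=
  (f /ₘ (φ ^ i)) %ₘ φ

/-- The residue ring `𝔽 = O/(π)` (the residue field of `K`). -/
abbrev Fres : Type _ := ↥(Oring p C.K) ⧸ (Ideal.span {C.πO} : Ideal ↥(Oring p C.K))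

/-- Reduction of polynomials modulo the maximal ideal `𝔪 = (π)` of `O`. -/
def redO (g : Polynomial ↥(Oring p C.K)) : Polynomial C.Fres :=
  g.map (Ideal.Quotient.mk (Ideal.span {C.πO}))

/-- The residue ring `𝔽_φ = O[x]/(π, φ(x))` (a finite field when `φ` is monic with
irreducible reduction). -/
abbrev Fphi (φ : Polynomial ↥(Oring p C.K)) : Type _ :=
  Polynomial ↥(Oring p C.K) ⧸
    (Ideal.span {Polynomial.C C.πO, φ} : Ideal (Polynomial ↥(Oring p C.K)))

/-- `red : O[x] → 𝔽_φ`, extended to polynomials with coefficients in `K` that have a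
(necessarily unique) preimage in `O[x]` (junk value `0` otherwise). -/
def resK (φ : Polynomial ↥(Oring p C.K)) (g : Polynomial ↥C.K) : C.Fphi φ :=
  if h : ∃ g' : Polynomial ↥(Oring p C.K), g'.map (Oring p C.K).subtype = g then
    Ideal.Quotient.mk _ h.choose
  else 0

/-- `g/π^{v(g)} ∈ K[x]`, the normalized polynomial whose reduction gives residual
coefficients. -/
def liftDiv (g : Polynomial ↥(Oring p C.K)) : Polynomial ↥C.K :=
  (g.map (Oring p C.K).subtype) *
    Polynomial.C (((C.πO : C.K)) ^ (-(zOf (C.vpol g))))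

/-! ### Newton polygons: supporting-line data for the slope `λ = -h/e` -/

/-- The quantity `e·v(a_i) + h·i` attached to the point `(i, v(a_i))` of a family of
coefficients `a`. -/
def ptValF (a : ℕ → Polynomial ↥(Oring p C.K)) (h e i : ℕ) : WithTop ℚ :=
  e • C.vpol (a i) + ((h * i : ℕ) : WithTop ℚ)

/-- `min_i (e·v(a_i) + h·i)`: `e` times the ordinate at the origin of the supporting
line of slope `λ = -h/e` of the principal polygon of the points `(i, v(a_i))`. -/
def wvalF (a : ℕ → Polynomial ↥(Oring p C.K)) (n h e : ℕ) : WithTop ℚ :=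
  (Finset.range (n + 1)).inf fun i => C.ptValF a h e i

/-- Initial abscissa of the `λ`-component (`λ = -h/e`). -/
def sInitF (a : ℕ → Polynomial ↥(Oring p C.K)) (n h e : ℕ) : ℕ :=
  sInf {i | C.ptValF a h e i = C.wvalF a n h e}

/-- Final abscissa of the `λ`-component (`λ = -h/e`). -/
def sFinF (a : ℕ → Polynomial ↥(Oring p C.K)) (n h e : ℕ) : ℕ :=
  sSup {i | C.ptValF a h e i = C.wvalF a n h e}

/-- Residual coefficient `c_i` attached to the slope `λ = -h/e`: it is
`red(a_i/π^{v(a_i)})` if `(i, v(a_i))` lies on the supporting line of slope `λ`, and `0`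
otherwise. -/
def resCoeffF (φ : Polynomial ↥(Oring p C.K)) (a : ℕ → Polynomial ↥(Oring p C.K))
    (n h e i : ℕ) : C.Fphi φ :=
  if C.ptValF a h e i = C.wvalF a n h e then C.resK φ (C.liftDiv (a i)) else 0

/-- The residual polynomial `R_λ(y) = ∑_{j=0}^d c_{s+je} y^j` attached to the slope
`λ = -h/e`. -/
def resPolyF (φ : Polynomial ↥(Oring p C.K)) (a : ℕ → Polynomial ↥(Oring p C.K))
    (n h e : ℕ) : Polynomial (C.Fphi φ) :=
  ∑ j ∈ Finset.range ((C.sFinF a n h e - C.sInitF a n h e) / e + 1),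
    Polynomial.C (C.resCoeffF φ a n h e (C.sInitF a n h e + j * e)) * Polynomial.X ^ j

/-- `(i, v(a_i))` lies on (the finite part of) the principal polygon of the points
`(i, v(a_i))`, i.e. on the supporting line of some negative slope. -/
def onF (a : ℕ → Polynomial ↥(Oring p C.K)) (n i : ℕ) : Prop :=
  ∃ h e : ℕ, 0 < h ∧ 0 < e ∧ C.ptValF a h e i = C.wvalF a n h e

/-- Residual coefficient `c_i` of the principal polygon of the points `(i, v(a_i))`. -/
def cCoeffF (φ : Polynomial ↥(Oring p C.K)) (a : ℕ → Polynomial ↥(Oring p C.K))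
    (n i : ℕ) : C.Fphi φ :=
  if C.onF a n i then C.resK φ (C.liftDiv (a i)) else 0

/-! Specializations to the `φ`-adic development of a polynomial `f`. -/

def ptVal (φ f : Polynomial ↥(Oring p C.K)) (h e i : ℕ) : WithTop ℚ :=
  C.ptValF (C.phiCoeff φ f) h e i

def wval (φ f : Polynomial ↥(Oring p C.K)) (h e : ℕ) : WithTop ℚ :=
  C.wvalF (C.phiCoeff φ f) f.natDegree h e

def sInit (φ f : Polynomial ↥(Oring p C.K)) (h e : ℕ) : ℕ :=
  C.sInitF (C.phiCoeff φ f) f.natDegree h e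

def sFin (φ f : Polynomial ↥(Oring p C.K)) (h e : ℕ) : ℕ :=
  C.sFinF (C.phiCoeff φ f) f.natDegree h e

/-- The residual polynomial `R_λ(f) ∈ 𝔽_φ[y]` of `f` attached to `λ = -h/e`. -/
def resPoly (φ f : Polynomial ↥(Oring p C.K)) (h e : ℕ) : Polynomial (C.Fphi φ) :=
  C.resPolyF φ (C.phiCoeff φ f) f.natDegree h e

/-- Residual coefficient `c_i` of `N_φ⁻(f)`. -/
def cCoeff (φ f : Polynomial ↥(Oring p C.K)) (i : ℕ) : C.Fphi φ :=
  C.cCoeffF φ (C.phiCoeff φ f) f.natDegree i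

/-- `ord_φ(f)`: the length of the side of slope `-∞` of `N_φ⁻(f)`. -/
def ordPhi (φ f : Polynomial ↥(Oring p C.K)) : ℕ := sSup {k | φ ^ k ∣ f}

/-- `ω(f) = ord_{φ̄}(f̄)`: for monic `f`, the length of the principal polygon
`N_φ⁻(f)`. -/
def omga (φ f : Polynomial ↥(Oring p C.K)) : ℕ := sSup {k | (C.redO φ) ^ k ∣ C.redO f}

/-! ### Evaluation in the algebraic closure -/

/-- The canonical map `O → Ω`. -/
def toOm : ↥(Oring p C.K) →+* Om p :=
  (algebraMap ↥C.K (Om p)).comp (Oring p C.K).subtype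

/-- Evaluation of a polynomial with coefficients in `O` at a point of the algebraic
closure. -/
def evOm (g : Polynomial ↥(Oring p C.K)) (θ : Om p) : Om p := (g.map C.toOm).eval θ

/-- The image of the uniformizer in `Ω`. -/
def piOm : Om p := C.toOm C.πO

/-- `γ(θ) = φ(θ)^e/π^h`. -/
def gamOm (φ : Polynomial ↥(Oring p C.K)) (h e : ℕ) (θ : Om p) : Om p :=
  (C.evOm φ θ) ^ (e : ℤ) * C.piOm ^ (-(h : ℤ))

/-- The canonical value in `Ω` of (a lift of) the residual coefficient `c_i` of `P`:
`(a_i/π^{v(a_i)})(θ)` when `(i, v(a_i))` lies on the supporting line, `0` otherwise. -/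
def cOm (φ P : Polynomial ↥(Oring p C.K)) (h e i : ℕ) (θ : Om p) : Om p :=
  if C.ptVal φ P h e i = C.wval φ P h e then
    C.evOm (C.phiCoeff φ P i) θ * C.piOm ^ (-(zOf (C.vpol (C.phiCoeff φ P i))))
  else 0

/-- The canonical value in `Ω` of (the canonical lift of) `R_λ(P)(γ̄)`:
`∑_j c_{s+je}(θ) · γ(θ)^j`.  Its residue class in `𝔽_L` is `R_λ(P)(γ̄)`. -/
def Rom (φ P : Polynomial ↥(Oring p C.K)) (h e : ℕ) (θ : Om p) : Om p :=
  ∑ j ∈ Finset.range ((C.sFin φ P h e - C.sInit φ P h e) / e + 1),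
    C.cOm φ P h e (C.sInit φ P h e + j * e) θ * (C.gamOm φ h e θ) ^ j

/-- `P⁰(θ) = ∑_{(i,u_i) ∈ S_λ(P)} a_i(θ) φ(θ)^i`. -/
def P0om (φ P : Polynomial ↥(Oring p C.K)) (h e : ℕ) (θ : Om p) : Om p :=
  ∑ i ∈ Finset.range (P.natDegree + 1),
    if C.ptVal φ P h e i = C.wval φ P h e then
      C.evOm (C.phiCoeff φ P i) θ * (C.evOm φ θ) ^ i
    else 0

/-- The value `P^S(θ) = π^{-u'} φ(θ)^{-s'} P⁰(θ)` of the virtual factor of `P` attached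
to `λ = -h/e` at `θ`. -/
def PSom (φ P : Polynomial ↥(Oring p C.K)) (h e : ℕ) (θ : Om p) : Om p :=
  C.piOm ^ (-(zOf (C.vpol (C.phiCoeff φ P (C.sInit φ P h e))))) *
    (C.evOm φ θ) ^ (-(C.sInit φ P h e : ℤ)) * C.P0om φ P h e θ

/-- `H(P)`: the ordinate at the origin of the line of slope `λ = -h/e` containing
`S_λ(P)`. -/
def Hq (φ P : Polynomial ↥(Oring p C.K)) (h e : ℕ) : ℚ :=
  qOf (C.wval φ P h e) / e

/-! ### Resultants and indices -/

/-- `v(Res(P, Q)) = ∑_{P(α)=0} v(Q(α))` (sum over the roots of `P` in `Ω` with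
multiplicity). -/
def vRes (P Q : Polynomial ↥(Oring p C.K)) : WithTop ℚ :=
  ((P.map C.toOm).roots.map fun α => C.w (C.evOm Q α)).sum

/-- `u_i = v(a_i)`, ordinate of the `i`-th point of the `φ`-Newton polygon. -/
def uQ (φ f : Polynomial ↥(Oring p C.K)) (i : ℕ) : WithTop ℚ :=
  C.vpol (C.phiCoeff φ f i)

/-- The ordinate of the `φ`-Newton polygon (lower convex envelope of the points
`(i, u_i)`) at the integer abscissa `i`: the minimum over all segments joining two points
`(j, u_j)`, `(k, u_k)` with `j ≤ i ≤ k` of their value at `i`. -/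
def NyW (φ f : Polynomial ↥(Oring p C.K)) (i : ℕ) : WithTop ℚ :=
  ((Finset.range (i + 1)) ×ˢ (Finset.Icc i f.natDegree)).inf fun jk =>
    if jk.1 = jk.2 then C.uQ φ f i
    else
      ((C.uQ φ f jk.1).map fun a => (((jk.2 - i : ℕ) : ℚ) / ((jk.2 - jk.1 : ℕ) : ℚ)) * a) +
      ((C.uQ φ f jk.2).map fun a => (((i - jk.1 : ℕ) : ℚ) / ((jk.2 - jk.1 : ℕ) : ℚ)) * a)

/-- Rational value of the ordinate of the `φ`-Newton polygon at abscissa `i`. -/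
def NyQ (φ f : Polynomial ↥(Oring p C.K)) (i : ℕ) : ℚ := qOf (C.NyW φ f i)

/-- `ind(N_φ⁻(f))`: the index of the principal `φ`-polygon of `f`; the side of slope
`-∞` (of length `ord_φ(f)`) contributes its length times the total height of the finite
part, and the finite part contributes the number of lattice points below (or on) the
polygon, strictly above the horizontal line through its last point and strictly beyond
the vertical line through the initial point of the finite part. -/
def indNP (φ f : Polynomial ↥(Oring p C.K)) : ℚ :=
  (C.ordPhi φ f) * (C.NyQ φ f (C.ordPhi φ f) - C.NyQ φ f (C.omga φ f)) +
  ∑ i ∈ Finset.Ioo (C.ordPhi φ f) (C.omga φ f),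
    ((⌊C.NyQ φ f i - C.NyQ φ f (C.omga φ f)⌋ : ℤ) : ℚ)

/-- Length `E` of the `λ`-component of `N_φ⁻(P)` for `λ = -μ`, `μ ∈ ℚ_{>0}`. -/
def Elen (φ P : Polynomial ↥(Oring p C.K)) (μ : ℚ) : ℕ :=
  C.sFin φ P μ.num.toNat μ.den - C.sInit φ P μ.num.toNat μ.den

/-- Height `H` of the `λ`-component of `N_φ⁻(P)` for `λ = -μ`. -/
def Hht (φ P : Polynomial ↥(Oring p C.K)) (μ : ℚ) : ℚ := (C.Elen φ P μ : ℚ) * μ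

/-- Total height of the finite part of `N_φ⁻(P)`. -/
def Htot (φ P : Polynomial ↥(Oring p C.K)) : ℚ :=
  ∑ᶠ μ : ℚ, if 0 < μ then C.Hht φ P μ else 0

/-- `∑_{i,j} min{E_i H'_j, E'_j H_i}` over the sides of `N_φ⁻(P)` and `N_φ⁻(Q)`,
where a side of slope `-∞` (of length `ord_φ`) has infinite height, so that it
contributes its length times the total height of the finite part of the other
polygon. -/
def resP (φ P Q : Polynomial ↥(Oring p C.K)) : ℚ :=
  (C.ordPhi φ P) * C.Htot φ Q + (C.ordPhi φ Q) * C.Htot φ P +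
  ∑ᶠ μ : ℚ, ∑ᶠ μ' : ℚ,
    if 0 < μ ∧ 0 < μ' then
      min ((C.Elen φ P μ : ℚ) * C.Hht φ Q μ') ((C.Elen φ Q μ' : ℚ) * C.Hht φ P μ)
    else 0

/-- `ord_ψ(R_λ(P))`: the multiplicity of the monic irreducible `ψ ∈ 𝔽_φ[y]` in the
residual polynomial of `P` attached to `λ = -h/e`. -/
def omPsi (φ : Polynomial ↥(Oring p C.K)) (ψ : Polynomial (C.Fphi φ))
    (P : Polynomial ↥(Oring p C.K)) (h e : ℕ) : ℕ :=
  sSup {k | ψ ^ k ∣ C.resPoly φ P h e}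

/-- The subring `O[θ]` of `Ω` generated by the ring of integers of `K` and `θ`. -/
def Otheta (θ : Om p) : Subring (Om p) :=
  Subring.closure ((C.OL C.K : Set (Om p)) ∪ {θ})

/-- The quotient `O_L / O[θ]` (as additive groups); its cardinality is
`q^{ind(F)}` for the minimal polynomial `F` of `θ` over `K`. -/
def idxQuot (L : IntermediateField ℚ_[p] (Om p)) (θ : Om p) : Type _ :=
  ↥(C.OL L) ⧸
    (AddSubgroup.comap ((C.OL L).subtype.toAddMonoidHom) (C.Otheta θ).toAddSubgroup)

end PadicCtx

/-!
Write `P = ∑ aᵢ φ^i` and `uᵢ = v(aᵢ)`. Since `θ` is integral over `O` and `v(φ(θ)) = h/e`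
(read off an irreducible factor of `f_{φ,λ}` vanishing at `θ`), the term `aᵢ(θ) φ(θ)^i` has
value at least `uᵢ + i·h/e`, the ordinate at the origin of the line of slope `-h/e` through
`(i, uᵢ)`. This ordinate equals `H(P)` for the points of `S_λ(P)` and exceeds it for all the
others, whence `v(P(θ) - P⁰(θ)) > H(P)` and `v(P⁰(θ)) ≥ H(P) = u' + s'h/e`, i.e.
`v(P^S(θ)) ≥ 0`. As `h` and `e` are coprime, the points of `S_λ(P)` have abscissae `s' + je`,
and for them `π^{-u'} φ(θ)^{-s'} aᵢ(θ) φ(θ)^i = (aᵢ/π^{uᵢ})(θ) γ(θ)^j`: so `P^S(θ)` is, term by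
term, the lift `∑ⱼ c_{s'+je}(θ) γ(θ)^j` of `R_λ(P)(γ̄)`.
-/

namespace Polynomial

variable {R : Type*} [CommRing R] {φ : R[X]}

theorem divByMonic_pow_succ (hφ : φ.Monic) (P : R[X]) (k : ℕ) :
    P /ₘ φ ^ (k + 1) = P /ₘ φ ^ k /ₘ φ := by
  nontriviality R
  refine (div_modByMonic_unique _ (P %ₘ φ ^ k + φ ^ k * (P /ₘ φ ^ k %ₘ φ)) (hφ.pow _)
    ⟨?_, ?_⟩).1
  · linear_combination φ ^ k * modByMonic_add_div (P /ₘ φ ^ k) φ + modByMonic_add_div P (φ ^ k)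
  have hk : degree (φ ^ k) ≠ ⊥ := degree_ne_bot.mpr (hφ.pow k).ne_zero
  rw [pow_succ, hφ.degree_mul]
  refine (degree_add_le _ _).trans_lt (max_lt ?_ ?_)
  · exact (degree_modByMonic_lt P (hφ.pow k)).trans_le
      (le_add_of_nonneg_right (zero_le_degree_iff.mpr hφ.ne_zero))
  · exact (degree_mul_le _ _).trans_lt (WithBot.add_lt_add_left hk (degree_modByMonic_lt _ hφ))

theorem sum_modByMonic_mul_pow_add (hφ : φ.Monic) (P : R[X]) (k : ℕ) :
    ∑ i ∈ Finset.range k, P /ₘ φ ^ i %ₘ φ * φ ^ i + P /ₘ φ ^ k * φ ^ k = P := by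
  induction k with
  | zero => simp
  | succ k ih =>
    rw [Finset.sum_range_succ, divByMonic_pow_succ hφ]
    linear_combination φ ^ k * modByMonic_add_div (P /ₘ φ ^ k) φ + ih

theorem divByMonic_pow_eq_zero (hφ : φ.Monic) (hφ0 : 0 < φ.natDegree) {P : R[X]} {k : ℕ}
    (hk : P.natDegree < k) : P /ₘ φ ^ k = 0 := by
  nontriviality R
  rw [divByMonic_eq_zero_iff (hφ.pow k)]
  refine degree_lt_degree ?_
  rw [hφ.natDegree_pow]
  exact hk.trans_le (Nat.le_mul_of_pos_right k hφ0)

theorem sum_modByMonic_mul_pow_eq (hφ : φ.Monic) (hφ0 : 0 < φ.natDegree) (P : R[X]) :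
    ∑ i ∈ Finset.range (P.natDegree + 1), P /ₘ φ ^ i %ₘ φ * φ ^ i = P := by
  simpa [divByMonic_pow_eq_zero hφ hφ0 P.natDegree.lt_succ_self] using
    sum_modByMonic_mul_pow_add hφ P (P.natDegree + 1)

theorem Monic.exists_irreducible_dvd_of_eval₂_eq_zero [NoZeroDivisors R] {S : Type*}
    [CommRing S] [IsDomain S] {f : R →+* S} {g : R[X]} (hg : g.Monic) {x : S}
    (hx : g.eval₂ f x = 0) :
    ∃ F : R[X], F.Monic ∧ Irreducible F ∧ F ∣ g ∧ F.eval₂ f x = 0 := by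
  have : Nontrivial R := f.domain_nontrivial
  induction hn : g.natDegree using Nat.strong_induction_on generalizing g with
  | _ n ih =>
  by_cases hirr : Irreducible g
  · exact ⟨g, hg, hirr, dvd_rfl, hx⟩
  have hg1 : g ≠ 1 := by rintro rfl; simp at hx
  obtain ⟨a, b, ha, hb, rfl, hda, hdb⟩ : ∃ a b : R[X], a.Monic ∧ b.Monic ∧ a * b = g ∧
      a.natDegree ≠ 0 ∧ b.natDegree ≠ 0 := by
    simpa [hg.irreducible_iff_natDegree, hg1, and_assoc] using hirr
  rw [ha.natDegree_mul hb] at hn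
  rcases mul_eq_zero.mp ((eval₂_mul f x).symm.trans hx) with hxa | hxb
  · obtain ⟨F, hFm, hFi, hFa, hFx⟩ := ih _ (by omega) ha hxa rfl
    exact ⟨F, hFm, hFi, hFa.mul_right b, hFx⟩
  · obtain ⟨F, hFm, hFi, hFb, hFx⟩ := ih _ (by omega) hb hxb rfl
    exact ⟨F, hFm, hFi, hFb.mul_left a, hFx⟩

end Polynomial

theorem zpow_mul_zpow_mul_pow_add_mul {F : Type*} [Field F] {π y : F} (hπ : π ≠ 0) (hy : y ≠ 0)
    (a : F) (U : ℤ) (h e s j : ℕ) :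
    π ^ (-(U + h * j)) * y ^ (-(s : ℤ)) * (a * y ^ (s + j * e)) =
      a * π ^ (-U) * (y ^ (e : ℤ) * π ^ (-(h : ℤ))) ^ j := by
  simp only [zpow_neg, zpow_add₀ hπ, zpow_natCast, pow_add, pow_mul, mul_pow, zpow_mul, inv_pow]
  field_simp
  ring

namespace PadicCtx

variable {p} (C : PadicCtx p)

def val : AddValuation (Om p) (WithTop ℚ) :=
  AddValuation.of C.w C.w_zero C.w_one C.w_add C.w_mul

theorem val_apply (x : Om p) : C.val x = C.w x := rfl

theorem w_pow_of_eq {x : Om p} {a : ℚ} (hx : C.w x = a) (n : ℕ) :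
    C.w (x ^ n) = ((n * a : ℚ) : WithTop ℚ) := by
  rw [← val_apply, AddValuation.map_pow, val_apply, hx, ← WithTop.coe_nsmul, nsmul_eq_mul]

theorem w_zpow_of_eq {x : Om p} {a : ℚ} (hx : C.w x = a) (k : ℤ) :
    C.w (x ^ k) = ((k * a : ℚ) : WithTop ℚ) := by
  cases k with
  | ofNat n => simpa using C.w_pow_of_eq hx n
  | negSucc n =>
    rw [zpow_negSucc, ← val_apply, AddValuation.map_inv, val_apply, C.w_pow_of_eq hx,
      ← WithTop.LinearOrderedAddCommGroup.coe_neg]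
    congr 1
    push_cast
    ring

theorem w_nonneg_of_eval₂_eq_zero {R : Type*} [CommRing R] {ψ : R →+* Om p}
    (hψ : ∀ c, 0 ≤ C.w (ψ c)) {q : R[X]} (hq : q.Monic) {x : Om p} (hx : q.eval₂ ψ x = 0) :
    0 ≤ C.w x := by
  set v := AddValuation.toValuation C.val
  have hv : ∀ y, v y ≤ 1 ↔ 0 ≤ C.w y := fun _ => Iff.rfl
  let ψ' : R →+* v.integer := ψ.codRestrict v.integer fun c => (hv _).2 (hψ c)
  have hint : IsIntegral v.integer x := ⟨q.map ψ', hq.map ψ', by rw [eval₂_map]; exact hx⟩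
  exact (hv x).1 ((Valuation.integer.integers v).mem_of_integral hint)

theorem w_toOm (x : ↥(Oring p C.K)) : C.w (C.toOm x) = C.vO x := rfl

theorem vO_nonneg (x : ↥(Oring p C.K)) : 0 ≤ C.vO x := by
  let _ : Algebra ℤ_[p] C.K := ((algebraMap ℚ_[p] C.K).comp PadicInt.Coe.ringHom).toAlgebra
  obtain ⟨q, hq, hqx⟩ : IsIntegral ℤ_[p] (x : C.K) := x.2
  have hroot : q.eval₂ ((algebraMap C.K (Om p)).comp (algebraMap ℤ_[p] C.K))
      (algebraMap C.K (Om p) x) = 0 := by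
    rw [← hom_eval₂, hqx, map_zero]
  refine C.w_nonneg_of_eval₂_eq_zero (fun c => ?_) hq hroot
  change 0 ≤ C.w (algebraMap ℚ_[p] (Om p) c)
  rcases eq_or_ne (c : ℚ_[p]) 0 with hc | hc
  · simp [hc, C.w_zero]
  · have hval : (0 : ℚ) ≤ ((c : ℚ_[p]).valuation : ℚ) * C.ePad :=
      mul_nonneg (by exact_mod_cast PadicInt.valuation_coe_nonneg (x := c)) C.ePad_pos.le
    rw [C.w_padic _ hc]
    exact_mod_cast hval

theorem w_piOm : C.w C.piOm = ((1 : ℚ) : WithTop ℚ) := C.w_π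

theorem evOm_eq_eval₂ (g : Polynomial ↥(Oring p C.K)) (θ : Om p) :
    C.evOm g θ = g.eval₂ C.toOm θ := eval_map _ _

theorem w_nonneg_of_evOm_eq_zero {g : Polynomial ↥(Oring p C.K)} (hg : g.Monic) {θ : Om p}
    (hθ : C.evOm g θ = 0) : 0 ≤ C.w θ :=
  C.w_nonneg_of_eval₂_eq_zero C.vO_nonneg hg ((C.evOm_eq_eval₂ g θ).symm.trans hθ)

theorem vpol_le_w_evOm {θ : Om p} (hθ : 0 ≤ C.w θ) (g : Polynomial ↥(Oring p C.K)) :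
    C.vpol g ≤ C.w (C.evOm g θ) := by
  rw [evOm_eq_eval₂, eval₂_eq_sum, Polynomial.sum_def, ← val_apply]
  refine AddValuation.map_le_sum _ fun i hi => ?_
  rw [AddValuation.map_mul, AddValuation.map_pow, val_apply, val_apply, C.w_toOm]
  exact (Finset.inf_le hi).trans (le_add_of_nonneg_right (nsmul_nonneg hθ i))

theorem vpol_eq_zOf {g : Polynomial ↥(Oring p C.K)} (hg : g ≠ 0) :
    C.vpol g = ((zOf (C.vpol g) : ℚ) : WithTop ℚ) := by
  obtain ⟨i, hi, hinf⟩ := g.support.exists_mem_eq_inf (support_nonempty.mpr hg)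
    fun n => C.vO (g.coeff n)
  obtain ⟨n, hn⟩ := C.w_Kint _ (Subtype.coe_ne_coe.mpr (mem_support_iff.mp hi))
  have hex : ∃ n : ℤ, C.vpol g = ((n : ℚ) : WithTop ℚ) := ⟨n, by rw [vpol, hinf]; exact hn⟩
  rw [zOf, dif_pos hex]
  exact hex.choose_spec

theorem evOm_eq_sum_phiCoeff {φ : Polynomial ↥(Oring p C.K)} (hφ : φ.Monic)
    (hφ0 : 0 < φ.natDegree) (P : Polynomial ↥(Oring p C.K)) (θ : Om p) :
    C.evOm P θ = ∑ i ∈ Finset.range (P.natDegree + 1),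
      C.evOm (C.phiCoeff φ P i) θ * C.evOm φ θ ^ i := by
  conv_lhs => rw [← sum_modByMonic_mul_pow_eq hφ hφ0 P]
  simp only [evOm_eq_eval₂, eval₂_finsetSum, eval₂_mul, eval₂_pow, phiCoeff]

theorem le_natDegree_of_phiCoeff_ne_zero {φ P : Polynomial ↥(Oring p C.K)} (hφ : φ.Monic)
    (hφ0 : 0 < φ.natDegree) {i : ℕ} (ha : C.phiCoeff φ P i ≠ 0) : i ≤ P.natDegree := by
  by_contra! hi
  exact ha (by rw [phiCoeff, divByMonic_pow_eq_zero hφ hφ0 hi, zero_modByMonic])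

theorem natDegree_pos_of_irreducible_redO {φ : Polynomial ↥(Oring p C.K)} (hφ : φ.Monic)
    (hirr : Irreducible (C.redO φ)) : 0 < φ.natDegree := by
  refine Nat.pos_of_ne_zero fun h0 => hirr.not_isUnit ?_
  rw [hφ.natDegree_eq_zero.mp h0]
  simp [redO]

/-- `uᵢ = v(aᵢ)` as an integer (junk value `0` when `aᵢ = 0`). -/
def coeffVal (φ P : Polynomial ↥(Oring p C.K)) (i : ℕ) : ℤ :=
  zOf (C.vpol (C.phiCoeff φ P i))

/-- The ordinate at the origin of the line of slope `-h/e` through `(i, u_i)`. -/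
def intercept (φ P : Polynomial ↥(Oring p C.K)) (h e i : ℕ) : ℚ :=
  C.coeffVal φ P i + i * (h / e)

section NewtonPolygon

variable {φ P : Polynomial ↥(Oring p C.K)} {h e : ℕ}

theorem ptVal_of_phiCoeff_ne_zero (he : 0 < e) {i : ℕ} (ha : C.phiCoeff φ P i ≠ 0) :
    C.ptVal φ P h e i = ((e * C.intercept φ P h e i : ℚ) : WithTop ℚ) := by
  rw [ptVal, ptValF, C.vpol_eq_zOf ha, ← WithTop.coe_nsmul, ← WithTop.coe_natCast,
    ← WithTop.coe_add, intercept, coeffVal]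
  congr 1
  field_simp
  push_cast
  ring

theorem ptVal_of_phiCoeff_eq_zero (he : 0 < e) {i : ℕ} (ha : C.phiCoeff φ P i = 0) :
    C.ptVal φ P h e i = ⊤ := by
  obtain ⟨k, rfl⟩ := Nat.exists_eq_succ_of_ne_zero he.ne'
  simp [ptVal, ptValF, ha, vpol, succ_nsmul]

theorem wval_ne_top (hφ : φ.Monic) (hφ0 : 0 < φ.natDegree) (hP : P ≠ 0) (he : 0 < e) :
    C.wval φ P h e ≠ ⊤ := by
  obtain ⟨i, hi, ha⟩ : ∃ i ≤ P.natDegree, C.phiCoeff φ P i ≠ 0 := by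
    by_contra! hzero
    refine hP ((sum_modByMonic_mul_pow_eq hφ hφ0 P).symm.trans (Finset.sum_eq_zero ?_))
    intro i hi
    rw [← phiCoeff, hzero i (Nat.lt_succ_iff.mp (Finset.mem_range.mp hi)), zero_mul]
  have hle : C.wval φ P h e ≤ C.ptVal φ P h e i :=
    Finset.inf_le (Finset.mem_range.mpr (Nat.lt_succ_of_le hi))
  rw [C.ptVal_of_phiCoeff_ne_zero he ha] at hle
  exact ne_top_of_le_ne_top WithTop.coe_ne_top hle

theorem wval_eq_Hq (he : 0 < e) (hW : C.wval φ P h e ≠ ⊤) :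
    C.wval φ P h e = ((e * C.Hq φ P h e : ℚ) : WithTop ℚ) := by
  obtain ⟨q, hq⟩ := WithTop.ne_top_iff_exists.mp hW
  rw [Hq, ← hq, qOf, WithTop.untopD_coe]
  congr 1
  field_simp

theorem phiCoeff_ne_zero_of_ptVal_eq (hW : C.wval φ P h e ≠ ⊤) (he : 0 < e) {i : ℕ}
    (hi : C.ptVal φ P h e i = C.wval φ P h e) : C.phiCoeff φ P i ≠ 0 := fun ha =>
  hW ((C.ptVal_of_phiCoeff_eq_zero he ha).symm.trans hi).symm

theorem intercept_eq_Hq (hW : C.wval φ P h e ≠ ⊤)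
    (he : 0 < e) {i : ℕ} (hi : C.ptVal φ P h e i = C.wval φ P h e) :
    C.intercept φ P h e i = C.Hq φ P h e := by
  rw [C.ptVal_of_phiCoeff_ne_zero he (C.phiCoeff_ne_zero_of_ptVal_eq hW he hi),
    C.wval_eq_Hq he hW] at hi
  exact mul_left_cancel₀ (by positivity) (WithTop.coe_injective hi)

theorem Hq_lt_intercept (hW : C.wval φ P h e ≠ ⊤)
    (he : 0 < e) {i : ℕ} (hi : i ≤ P.natDegree)
    (ha : C.phiCoeff φ P i ≠ 0) (hoff : C.ptVal φ P h e i ≠ C.wval φ P h e) :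
    C.Hq φ P h e < C.intercept φ P h e i := by
  have hle : C.wval φ P h e ≤ C.ptVal φ P h e i :=
    Finset.inf_le (Finset.mem_range.mpr (Nat.lt_succ_of_le hi))
  rw [C.ptVal_of_phiCoeff_ne_zero he ha, C.wval_eq_Hq he hW] at hle hoff
  have : (e : ℚ) * C.Hq φ P h e < e * C.intercept φ P h e i :=
    lt_of_le_of_ne (WithTop.coe_le_coe.mp hle) fun heq => hoff (congrArg _ heq).symm
  exact lt_of_mul_lt_mul_left this (by positivity)

theorem ptVal_sInit : C.ptVal φ P h e (C.sInit φ P h e) = C.wval φ P h e := by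
  obtain ⟨i, -, hi⟩ := (Finset.range (P.natDegree + 1)).exists_mem_eq_inf
    Finset.nonempty_range_add_one (C.ptValF (C.phiCoeff φ P) h e)
  exact Nat.sInf_mem (s := {i | C.ptVal φ P h e i = C.wval φ P h e}) ⟨i, hi.symm⟩

theorem sInit_le {i : ℕ} (hi : C.ptVal φ P h e i = C.wval φ P h e) : C.sInit φ P h e ≤ i :=
  Nat.sInf_le hi

theorem le_sFin (hφ : φ.Monic) (hφ0 : 0 < φ.natDegree) (hW : C.wval φ P h e ≠ ⊤) (he : 0 < e)
    {i : ℕ} (hi : C.ptVal φ P h e i = C.wval φ P h e) : i ≤ C.sFin φ P h e :=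
  le_csSup ⟨P.natDegree, fun _ hj =>
    C.le_natDegree_of_phiCoeff_ne_zero hφ hφ0 (C.phiCoeff_ne_zero_of_ptVal_eq hW he hj)⟩ hi

theorem coeffVal_line (hW : C.wval φ P h e ≠ ⊤) (he : 0 < e) {i : ℕ}
    (hi : C.ptVal φ P h e i = C.wval φ P h e) :
    (e : ℤ) * C.coeffVal φ P i + h * i =
      e * C.coeffVal φ P (C.sInit φ P h e) + h * C.sInit φ P h e := by
  have hline := (C.intercept_eq_Hq hW he hi).trans (C.intercept_eq_Hq hW he C.ptVal_sInit).symm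
  simp only [intercept] at hline
  field_simp at hline
  qify
  linear_combination hline

theorem dvd_sub_sInit (hW : C.wval φ P h e ≠ ⊤) (hcop : Nat.Coprime h e) (he : 0 < e) {i : ℕ}
    (hi : C.ptVal φ P h e i = C.wval φ P h e) : e ∣ i - C.sInit φ P h e := by
  have hline := C.coeffVal_line hW he hi
  refine hcop.symm.dvd_of_dvd_mul_left (Int.natCast_dvd_natCast.mp
    ⟨C.coeffVal φ P (C.sInit φ P h e) - C.coeffVal φ P i, ?_⟩)
  rw [Nat.cast_mul, Nat.cast_sub (C.sInit_le hi)]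
  linear_combination hline

theorem coeffVal_sInit_eq (hW : C.wval φ P h e ≠ ⊤) (he : 0 < e) {j : ℕ}
    (hj : C.ptVal φ P h e (C.sInit φ P h e + j * e) = C.wval φ P h e) :
    C.coeffVal φ P (C.sInit φ P h e) = C.coeffVal φ P (C.sInit φ P h e + j * e) + h * j := by
  have hline := C.coeffVal_line hW he hj
  push_cast at hline
  refine mul_left_cancel₀ (by positivity : (e : ℤ) ≠ 0) ?_
  linear_combination -hline

end NewtonPolygon

section Evaluation

variable {φ P : Polynomial ↥(Oring p C.K)} {h e : ℕ} {θ : Om p}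

theorem intercept_le_w_term (hθ : 0 ≤ C.w θ)
    (hφθ : C.w (C.evOm φ θ) = ((h / e : ℚ) : WithTop ℚ)) {i : ℕ} (ha : C.phiCoeff φ P i ≠ 0) :
    (C.intercept φ P h e i : WithTop ℚ) ≤
      C.w (C.evOm (C.phiCoeff φ P i) θ * C.evOm φ θ ^ i) := by
  rw [C.w_mul, C.w_pow_of_eq hφθ, intercept, WithTop.coe_add]
  gcongr
  exact (C.vpol_eq_zOf ha).symm.trans_le (C.vpol_le_w_evOm hθ _)

theorem Hq_le_w_P0om (hθ : 0 ≤ C.w θ) (hφθ : C.w (C.evOm φ θ) = ((h / e : ℚ) : WithTop ℚ))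
    (hW : C.wval φ P h e ≠ ⊤) (he : 0 < e) :
    (C.Hq φ P h e : WithTop ℚ) ≤ C.w (C.P0om φ P h e θ) := by
  rw [P0om, ← val_apply]
  refine AddValuation.map_le_sum _ fun i _ => ?_
  split_ifs with hi
  · rw [val_apply, ← C.intercept_eq_Hq hW he hi]
    exact C.intercept_le_w_term hθ hφθ (C.phiCoeff_ne_zero_of_ptVal_eq hW he hi)
  · simp

theorem Hq_lt_w_sub_P0om (hφ : φ.Monic) (hφ0 : 0 < φ.natDegree) (hθ : 0 ≤ C.w θ)
    (hφθ : C.w (C.evOm φ θ) = ((h / e : ℚ) : WithTop ℚ)) (hW : C.wval φ P h e ≠ ⊤)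
    (he : 0 < e) :
    (C.Hq φ P h e : WithTop ℚ) < C.w (C.evOm P θ - C.P0om φ P h e θ) := by
  rw [C.evOm_eq_sum_phiCoeff hφ hφ0, P0om, ← Finset.sum_sub_distrib, ← val_apply]
  refine AddValuation.map_lt_sum _ WithTop.coe_ne_top fun i hi => ?_
  split_ifs with hon
  · simp
  by_cases ha : C.phiCoeff φ P i = 0
  · simp [ha, evOm_eq_eval₂]
  rw [sub_zero, val_apply]
  exact (WithTop.coe_lt_coe.mpr (C.Hq_lt_intercept hW he
    (Nat.lt_succ_iff.mp (Finset.mem_range.mp hi)) ha hon)).trans_le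
    (C.intercept_le_w_term hθ hφθ ha)

theorem w_PSom_nonneg (hθ : 0 ≤ C.w θ) (hφθ : C.w (C.evOm φ θ) = ((h / e : ℚ) : WithTop ℚ))
    (hW : C.wval φ P h e ≠ ⊤) (he : 0 < e) : 0 ≤ C.w (C.PSom φ P h e θ) := by
  have hHq : ((-C.coeffVal φ P (C.sInit φ P h e) : ℤ) : ℚ) * 1 +
      ((-(C.sInit φ P h e : ℤ) : ℤ) : ℚ) * (h / e) + C.Hq φ P h e = 0 := by
    rw [← C.intercept_eq_Hq hW he C.ptVal_sInit, intercept]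
    push_cast
    ring
  rw [PSom, C.w_mul, C.w_mul, C.w_zpow_of_eq C.w_piOm, C.w_zpow_of_eq hφθ]
  calc (0 : WithTop ℚ)
      = ((((-C.coeffVal φ P (C.sInit φ P h e) : ℤ) : ℚ) * 1 : ℚ) : WithTop ℚ) +
          ((((-(C.sInit φ P h e : ℤ) : ℤ) : ℚ) * (h / e) : ℚ) : WithTop ℚ) +
          (C.Hq φ P h e : WithTop ℚ) := by
        rw [← WithTop.coe_add, ← WithTop.coe_add, hHq, WithTop.coe_zero]
    _ ≤ _ := add_le_add le_rfl (C.Hq_le_w_P0om hθ hφθ hW he)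

theorem PSom_eq_Rom (hφ : φ.Monic) (hφ0 : 0 < φ.natDegree) (hcop : Nat.Coprime h e)
    (hW : C.wval φ P h e ≠ ⊤) (he : 0 < e) (hφθ : C.evOm φ θ ≠ 0) :
    C.PSom φ P h e θ = C.Rom φ P h e θ := by
  have hπ : C.piOm ≠ 0 := fun h0 => by simpa [h0, C.w_zero] using C.w_piOm
  have hback : ∀ i, C.ptVal φ P h e i = C.wval φ P h e →
      C.sInit φ P h e + (i - C.sInit φ P h e) / e * e = i := fun i hi => by
    rw [Nat.div_mul_cancel (C.dvd_sub_sInit hW hcop he hi), Nat.add_sub_cancel' (C.sInit_le hi)]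
  rw [PSom, P0om, Rom, Finset.mul_sum]
  simp only [cOm, mul_ite, mul_zero, ite_mul, zero_mul]
  rw [← Finset.sum_filter, ← Finset.sum_filter]
  refine Finset.sum_nbij' (fun i => (i - C.sInit φ P h e) / e) (fun j => C.sInit φ P h e + j * e)
    ?_ ?_ ?_ ?_ ?_
  · intro i hi
    have hon := (Finset.mem_filter.mp hi).2
    refine Finset.mem_filter.mpr ⟨Finset.mem_range.mpr (Nat.lt_succ_of_le ?_), by rwa [hback i hon]⟩
    exact Nat.div_le_div_right (Nat.sub_le_sub_right (C.le_sFin hφ hφ0 hW he hon) _)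
  · intro j hj
    have hon := (Finset.mem_filter.mp hj).2
    refine Finset.mem_filter.mpr ⟨Finset.mem_range.mpr (Nat.lt_succ_of_le ?_), hon⟩
    exact C.le_natDegree_of_phiCoeff_ne_zero hφ hφ0 (C.phiCoeff_ne_zero_of_ptVal_eq hW he hon)
  · exact fun i hi => hback i (Finset.mem_filter.mp hi).2
  · intro j _
    simp [Nat.mul_div_cancel _ he]
  · intro i hi
    have hon := (Finset.mem_filter.mp hi).2
    obtain ⟨j, rfl⟩ : ∃ j, C.sInit φ P h e + j * e = i := ⟨_, hback i hon⟩
    simp only [Nat.add_sub_cancel_left, Nat.mul_div_cancel _ he]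
    rw [show zOf (C.vpol (C.phiCoeff φ P (C.sInit φ P h e))) = _ from C.coeffVal_sInit_eq hW he hon]
    exact zpow_mul_zpow_mul_pow_add_mul hπ hφθ _ _ _ _ _ _

end Evaluation

end PadicCtx

theorem virtual_factor_value
    (C : PadicCtx p)
    (φ : Polynomial ↥(Oring p C.K)) (hφm : φ.Monic) (hφirr : Irreducible (C.redO φ))
    (h e : ℕ) (he : 0 < e) (hcop : Nat.Coprime h e)
    -- the factor `f_{φ,λ}` of `f` attached to `(φ, λ)` by the Theorem of the polygon:
    (flam : Polynomial ↥(Oring p C.K)) (hflamm : flam.Monic)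
    (hflam : ∀ F : Polynomial ↥(Oring p C.K), F.Monic → Irreducible F → F ∣ flam →
      (∃ k : ℕ, 1 ≤ k ∧ C.redO F = (C.redO φ) ^ k) ∧
      (∀ θ' : Om p, C.evOm F θ' = 0 → C.w (C.evOm φ θ') = ((h / e : ℚ) : WithTop ℚ)))
    -- a fixed root `θ` of `f_{φ,λ}`:
    (θ : Om p) (hθ : C.evOm flam θ = 0)
    :
    ∀ P : Polynomial ↥(Oring p C.K), P ≠ 0 →
      0 ≤ C.w (C.PSom φ P h e θ) ∧
      0 < C.w (C.PSom φ P h e θ - C.Rom φ P h e θ) ∧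
      ((C.Hq φ P h e : ℚ) : WithTop ℚ) < C.w (C.evOm P θ - C.P0om φ P h e θ) := by
  intro P hP
  have hφ0 := C.natDegree_pos_of_irreducible_redO hφm hφirr
  have hθ0 : 0 ≤ C.w θ := C.w_nonneg_of_evOm_eq_zero hflamm hθ
  obtain ⟨F, hFm, hFirr, hFdvd, hFθ⟩ :=
    hflamm.exists_irreducible_dvd_of_eval₂_eq_zero ((C.evOm_eq_eval₂ flam θ).symm.trans hθ)
  have hφθ : C.w (C.evOm φ θ) = ((h / e : ℚ) : WithTop ℚ) :=
    (hflam F hFm hFirr hFdvd).2 θ ((C.evOm_eq_eval₂ F θ).trans hFθ)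
  have hφθ0 : C.evOm φ θ ≠ 0 := fun h0 => by simp [h0, C.w_zero] at hφθ
  have hW := C.wval_ne_top (h := h) hφm hφ0 hP he
  refine ⟨C.w_PSom_nonneg hθ0 hφθ hW he, ?_, C.Hq_lt_w_sub_P0om hφm hφ0 hθ0 hφθ hW he⟩
  rw [C.PSom_eq_Rom hφm hφ0 hcop hW he hφθ0, sub_self, C.w_zero]
  exact WithTop.coe_lt_top 0
end
end

section
/- Let N and N′ be principal polygons such that not both contain a side of slope −∞. Then ind(N + N′) = ind(N) + ind(N′) + res(N, N′), where res(N, N′) = ∑_{i,j} min{E_i H′_j, E′_j H_i}, the sum taken over the sides S_i of N (lengths E_i, heights H_i) and the sides S′_j of N′ (lengths E′_j, heights H′_j), with min{a·∞, b} = b for b finite. -/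
/-!
Principal polygons of negative slopes, encoded in canonical form.

A side of finite negative slope `λ = -h/e` (`h, e` coprime positive) with integer end
points is determined by its slope and its degree `d`; its length is `E = d·e` and its
height is `H = d·h`.  We parameterize finite slopes by the positive rational `μ = h/e`
(so `λ = -μ`, `e = μ.den`, `h = μ.num`), and encode a principal polygon in canonical
form as a finitely supported function `D : ℚ →₀ ℕ` assigning to each (absolute value of
a) slope the degree of the corresponding side (`0` if there is no such side), together
with the length `Einf` of the side of slope `-∞` (`0` if there is none).  The sum of two
principal polygons (joining all sides ordered by increasing slopes, i.e. merging sides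
of equal slope) is then `(D + D', Einf + Einf')`.
-/

noncomputable section

/-- Length `E(S)` of the side of slope `-μ` and degree `d`. -/
def sideE (μ : ℚ) (d : ℕ) : ℚ := d * μ.den

/-- Height `H(S)` of the side of slope `-μ` and degree `d`. -/
def sideH (μ : ℚ) (d : ℕ) : ℚ := d * μ.num

/-- Index `ind(S) = (EH − E − H + d)/2` of a side of finite slope. -/
def sideInd (μ : ℚ) (d : ℕ) : ℚ :=
  (sideE μ d * sideH μ d - sideE μ d - sideH μ d + d) / 2

/-- Total height of the finite part of a principal polygon. -/
def Hfin (D : ℚ →₀ ℕ) : ℚ := ∑ᶠ μ : ℚ, sideH μ (D μ)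

/-- Index of a principal polygon: `ind(N) = ∑_i ind(S_i) + ∑_{i<j} E_i H_j`, the sides
being ordered by increasing slopes (the side of slope `-∞` coming first, with
`ind = 0`, and contributing its length times the total height of the finite part). -/
def polyInd (D : ℚ →₀ ℕ) (Einf : ℕ) : ℚ :=
  (∑ᶠ μ : ℚ, sideInd μ (D μ)) +
  (∑ᶠ μ : ℚ, ∑ᶠ μ' : ℚ, if μ' < μ then sideE μ (D μ) * sideH μ' (D μ') else 0) +
  Einf * Hfin D

/-- `res(N, N') = ∑_{i,j} min{E_i H'_j, E'_j H_i}`, the sum over the sides `S_i` of `N`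
and `S'_j` of `N'`, with the convention `min{a·∞, b} = b` for finite `b` (so a side of
slope `-∞` contributes its length times the total height of the finite part of the
other polygon). -/
def polyRes (D D' : ℚ →₀ ℕ) (Einf Einf' : ℕ) : ℚ :=
  Einf * Hfin D' + Einf' * Hfin D +
  ∑ᶠ μ : ℚ, ∑ᶠ μ' : ℚ,
    min (sideE μ (D μ) * sideH μ' (D' μ')) (sideE μ' (D' μ') * sideH μ (D μ))


lemma sideE_zero (μ : ℚ) : sideE μ 0 = 0 := by simp [sideE]

lemma sideH_zero (μ : ℚ) : sideH μ 0 = 0 := by simp [sideH]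

lemma sideInd_zero (μ : ℚ) : sideInd μ 0 = 0 := by
  simp [sideInd, sideE_zero, sideH_zero]

lemma sideE_add (μ : ℚ) (d d' : ℕ) : sideE μ (d + d') = sideE μ d + sideE μ d' := by
  simp only [sideE]; push_cast; ring

lemma sideH_add (μ : ℚ) (d d' : ℕ) : sideH μ (d + d') = sideH μ d + sideH μ d' := by
  simp only [sideH]; push_cast; ring

lemma sideInd_add (μ : ℚ) (d d' : ℕ) :
    sideInd μ (d + d') = sideInd μ d + sideInd μ d' + sideE μ d * sideH μ d' := by
  simp only [sideInd, sideE, sideH]; push_cast; ring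

lemma rat_cmp {μ μ' : ℚ} (h : μ' ≤ μ) :
    (μ'.num : ℚ) * μ.den ≤ (μ.num : ℚ) * μ'.den := by
  rw [← div_le_div_iff₀ (by exact_mod_cast μ'.den_pos) (by exact_mod_cast μ.den_pos),
    Rat.num_div_den, Rat.num_div_den]
  exact h

/-- Let `N` and `N'` be principal polygons such that not both contain a side of slope
`−∞`. Then `ind(N + N') = ind(N) + ind(N') + res(N, N')`. -/
theorem polyInd_add (D D' : ℚ →₀ ℕ) (Einf Einf' : ℕ)
    (hD : ∀ μ ∈ D.support, 0 < μ) (hD' : ∀ μ ∈ D'.support, 0 < μ)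
    (hnotboth : Einf = 0 ∨ Einf' = 0) :
    polyInd (D + D') (Einf + Einf') =
      polyInd D Einf + polyInd D' Einf' + polyRes D D' Einf Einf' := by
  classical
  clear hD hD' hnotboth
  set s : Finset ℚ := D.support ∪ D'.support with hs
  have hDz : ∀ μ : ℚ, μ ∉ s → D μ = 0 := fun μ h =>
    Finsupp.notMem_support_iff.mp fun h' => h (Finset.mem_union_left _ h')
  have hD'z : ∀ μ : ℚ, μ ∉ s → D' μ = 0 := fun μ h =>
    Finsupp.notMem_support_iff.mp fun h' => h (Finset.mem_union_right _ h')
  have hz : ∀ μ : ℚ, μ ∉ s → D μ + D' μ = 0 := fun μ h => by rw [hDz μ h, hD'z μ h]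
  have key : ∀ f : ℚ → ℚ, (∀ μ, μ ∉ s → f μ = 0) → ∑ᶠ μ, f μ = ∑ μ ∈ s, f μ := by
    intro f hf
    apply finsum_eq_finset_sum_of_support_subset
    intro μ hμ
    simp only [Function.mem_support] at hμ
    by_contra h
    exact hμ (hf μ (by simpa using h))
  have key2 : ∀ F : ℚ → ℚ → ℚ, (∀ μ μ', μ ∉ s ∨ μ' ∉ s → F μ μ' = 0) →
      (∑ᶠ μ, ∑ᶠ μ', F μ μ') = ∑ μ ∈ s, ∑ μ' ∈ s, F μ μ' := by
    intro F hF
    rw [key _ (fun μ h => by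
      have h0 : ∀ μ', F μ μ' = 0 := fun μ' => hF μ μ' (Or.inl h)
      simp only [h0, finsum_zero])]
    exact Finset.sum_congr rfl fun μ _ => key _ fun μ' h => hF μ μ' (Or.inr h)
  simp only [polyInd, polyRes, Hfin, Finsupp.add_apply]
  have c1 : (∑ᶠ μ : ℚ, sideInd μ (D μ + D' μ)) = ∑ μ ∈ s, sideInd μ (D μ + D' μ) :=
    key _ fun μ h => by rw [hz μ h, sideInd_zero]
  have c2 : (∑ᶠ μ : ℚ, sideInd μ (D μ)) = ∑ μ ∈ s, sideInd μ (D μ) :=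
    key _ fun μ h => by rw [hDz μ h, sideInd_zero]
  have c3 : (∑ᶠ μ : ℚ, sideInd μ (D' μ)) = ∑ μ ∈ s, sideInd μ (D' μ) :=
    key _ fun μ h => by rw [hD'z μ h, sideInd_zero]
  have c4 : (∑ᶠ μ : ℚ, sideH μ (D μ + D' μ)) = ∑ μ ∈ s, sideH μ (D μ + D' μ) :=
    key _ fun μ h => by rw [hz μ h, sideH_zero]
  have c5 : (∑ᶠ μ : ℚ, sideH μ (D μ)) = ∑ μ ∈ s, sideH μ (D μ) :=
    key _ fun μ h => by rw [hDz μ h, sideH_zero]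
  have c6 : (∑ᶠ μ : ℚ, sideH μ (D' μ)) = ∑ μ ∈ s, sideH μ (D' μ) :=
    key _ fun μ h => by rw [hD'z μ h, sideH_zero]
  have c7 : (∑ᶠ μ : ℚ, ∑ᶠ μ' : ℚ,
        if μ' < μ then sideE μ (D μ + D' μ) * sideH μ' (D μ' + D' μ') else 0)
      = ∑ μ ∈ s, ∑ μ' ∈ s,
        if μ' < μ then sideE μ (D μ + D' μ) * sideH μ' (D μ' + D' μ') else 0 := by
    refine key2 _ fun μ μ' h => ?_
    rcases h with h | h
    · simp [hz μ h, sideE_zero]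
    · simp [hz μ' h, sideH_zero]
  have c8 : (∑ᶠ μ : ℚ, ∑ᶠ μ' : ℚ,
        if μ' < μ then sideE μ (D μ) * sideH μ' (D μ') else 0)
      = ∑ μ ∈ s, ∑ μ' ∈ s, if μ' < μ then sideE μ (D μ) * sideH μ' (D μ') else 0 := by
    refine key2 _ fun μ μ' h => ?_
    rcases h with h | h
    · simp [hDz μ h, sideE_zero]
    · simp [hDz μ' h, sideH_zero]
  have c9 : (∑ᶠ μ : ℚ, ∑ᶠ μ' : ℚ,
        if μ' < μ then sideE μ (D' μ) * sideH μ' (D' μ') else 0)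
      = ∑ μ ∈ s, ∑ μ' ∈ s, if μ' < μ then sideE μ (D' μ) * sideH μ' (D' μ') else 0 := by
    refine key2 _ fun μ μ' h => ?_
    rcases h with h | h
    · simp [hD'z μ h, sideE_zero]
    · simp [hD'z μ' h, sideH_zero]
  have c10 : (∑ᶠ μ : ℚ, ∑ᶠ μ' : ℚ,
        min (sideE μ (D μ) * sideH μ' (D' μ')) (sideE μ' (D' μ') * sideH μ (D μ)))
      = ∑ μ ∈ s, ∑ μ' ∈ s,
        min (sideE μ (D μ) * sideH μ' (D' μ')) (sideE μ' (D' μ') * sideH μ (D μ)) := by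
    refine key2 _ fun μ μ' h => ?_
    rcases h with h | h
    · simp [hDz μ h, sideE_zero, sideH_zero]
    · simp [hD'z μ' h, sideE_zero, sideH_zero]
  rw [c1, c2, c3, c4, c5, c6, c7, c8, c9, c10]
  have hmin : ∀ μ μ' : ℚ,
      min (sideE μ (D μ) * sideH μ' (D' μ')) (sideE μ' (D' μ') * sideH μ (D μ))
      = if μ' < μ then sideE μ (D μ) * sideH μ' (D' μ')
        else sideE μ' (D' μ') * sideH μ (D μ) := by
    intro μ μ'
    have h2 : (0:ℚ) ≤ (D μ : ℚ) := Nat.cast_nonneg _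
    have h3 : (0:ℚ) ≤ (D' μ' : ℚ) := Nat.cast_nonneg _
    by_cases h : μ' < μ
    · rw [if_pos h, min_eq_left]
      have h1 := rat_cmp h.le
      simp only [sideE, sideH]
      nlinarith [mul_le_mul_of_nonneg_left h1 (mul_nonneg h2 h3)]
    · rw [if_neg h, min_eq_right]
      have h1 := rat_cmp (not_lt.mp h)
      simp only [sideE, sideH]
      nlinarith [mul_le_mul_of_nonneg_left h1 (mul_nonneg h2 h3)]
  have A : (∑ μ ∈ s, sideInd μ (D μ + D' μ))
      = (∑ μ ∈ s, sideInd μ (D μ)) + (∑ μ ∈ s, sideInd μ (D' μ))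
        + ∑ μ ∈ s, sideE μ (D μ) * sideH μ (D' μ) := by
    rw [← Finset.sum_add_distrib, ← Finset.sum_add_distrib]
    exact Finset.sum_congr rfl fun μ _ => sideInd_add μ (D μ) (D' μ)
  have B : (∑ μ ∈ s, sideH μ (D μ + D' μ))
      = (∑ μ ∈ s, sideH μ (D μ)) + ∑ μ ∈ s, sideH μ (D' μ) := by
    rw [← Finset.sum_add_distrib]
    exact Finset.sum_congr rfl fun μ _ => sideH_add μ (D μ) (D' μ)
  have C : (∑ μ ∈ s, ∑ μ' ∈ s,
        if μ' < μ then sideE μ (D μ + D' μ) * sideH μ' (D μ' + D' μ') else 0)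
      = (∑ μ ∈ s, ∑ μ' ∈ s, if μ' < μ then sideE μ (D μ) * sideH μ' (D μ') else 0)
      + (∑ μ ∈ s, ∑ μ' ∈ s, if μ' < μ then sideE μ (D μ) * sideH μ' (D' μ') else 0)
      + (∑ μ ∈ s, ∑ μ' ∈ s, if μ' < μ then sideE μ (D' μ) * sideH μ' (D μ') else 0)
      + (∑ μ ∈ s, ∑ μ' ∈ s, if μ' < μ then sideE μ (D' μ) * sideH μ' (D' μ') else 0) := by
    simp only [← Finset.sum_add_distrib]
    refine Finset.sum_congr rfl fun μ _ => Finset.sum_congr rfl fun μ' _ => ?_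
    rw [sideE_add, sideH_add]
    split_ifs <;> ring
  have M : (∑ μ ∈ s, ∑ μ' ∈ s,
        min (sideE μ (D μ) * sideH μ' (D' μ')) (sideE μ' (D' μ') * sideH μ (D μ)))
      = (∑ μ ∈ s, ∑ μ' ∈ s, if μ' < μ then sideE μ (D μ) * sideH μ' (D' μ') else 0)
      + ((∑ μ ∈ s, ∑ μ' ∈ s, if μ' < μ then sideE μ (D' μ) * sideH μ' (D μ') else 0)
      + ∑ μ ∈ s, sideE μ (D μ) * sideH μ (D' μ)) := by
    have step1 : ∀ μ μ' : ℚ,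
        min (sideE μ (D μ) * sideH μ' (D' μ')) (sideE μ' (D' μ') * sideH μ (D μ))
        = (if μ' < μ then sideE μ (D μ) * sideH μ' (D' μ') else 0)
        + (if ¬ μ' < μ then sideE μ' (D' μ') * sideH μ (D μ) else 0) := by
      intro μ μ'
      rw [hmin μ μ']
      by_cases h : μ' < μ <;> simp [h]
    simp only [step1, Finset.sum_add_distrib]
    congr 1
    have swap : (∑ μ ∈ s, ∑ μ' ∈ s,
          if ¬ μ' < μ then sideE μ' (D' μ') * sideH μ (D μ) else 0)
        = ∑ μ ∈ s, ∑ μ' ∈ s, if ¬ μ < μ' then sideE μ (D' μ) * sideH μ' (D μ') else 0 :=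
      Finset.sum_comm
    rw [swap]
    have step2 : ∀ μ μ' : ℚ,
        (if ¬ μ < μ' then sideE μ (D' μ) * sideH μ' (D μ') else 0)
        = (if μ' < μ then sideE μ (D' μ) * sideH μ' (D μ') else 0)
        + (if μ = μ' then sideE μ (D' μ) * sideH μ' (D μ') else 0) := by
      intro μ μ'
      rcases lt_trichotomy μ μ' with h | h | h
      · simp [h, asymm h, h.ne]
      · simp [h, lt_irrefl]
      · simp [h, asymm h, h.ne']
    simp only [step2, Finset.sum_add_distrib]
    congr 1
    refine Finset.sum_congr rfl fun μ hμ => ?_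
    rw [Finset.sum_ite_eq s μ (fun μ' => sideE μ (D' μ) * sideH μ' (D μ')), if_pos hμ]
    simp only [sideE, sideH]
    ring
  rw [A, B, C, M]
  push_cast
  ring
end
end

section
/- The map J′ → ℤ/(e_1⋯e_r)ℤ sending j′ to the class of λ_{j′} is a bijection; in particular, the fractional parts of the rational numbers ν_{j′}, for j′ ∈ J′, are pairwise distinct and their set equals {k/(e_1⋯e_r) : 0 ≤ k < e_1⋯e_r}. Consequently, for every k = (k_1, …, k_r) ∈ ℕ^r there is a unique j′ ∈ J′ such that e_1⋯e_r divides λ_{j′ + (e_1k_1, …, e_rk_r)}; this j′ satisfies j′_r = 0, and for each 1 ≤ s < r the coordinate j′_s depends only on (k_{s+1}, …, k_r), i.e. two vectors k and k̃ with k_t = k̃_t for all t > s yield the same j′_s. -/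
/-!
Combinatorics of the values `ν_s` and `λ_j` attached to data
`e_1,…,e_r, h_1,…,h_r, f_1,…,f_{r−1}` (here all indexed from `0`, so the paper's index
`s ∈ {1,…,r}` corresponds to `s − 1 ∈ {0,…,r−1}`).
-/

noncomputable section

/-- `ν_s = ∑_{i=1}^{s} (e_i f_i ⋯ e_{s−1} f_{s−1}) · h_i/(e_1 ⋯ e_i)` (0-indexed). -/
def nuS (e h f : ℕ → ℕ) (s : ℕ) : ℚ :=
  ∑ i ∈ Finset.range (s + 1),
    (∏ t ∈ Finset.Ico i s, ((e t * f t : ℕ) : ℚ)) * (h i : ℚ) /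
      (∏ t ∈ Finset.range (i + 1), ((e t : ℕ) : ℚ))

/-- `ν_j = j_1 ν_1 + ⋯ + j_r ν_r`. -/
def nuJ (r : ℕ) (e h f : ℕ → ℕ) (j : Fin r → ℕ) : ℚ :=
  ∑ s : Fin r, (j s : ℚ) * nuS e h f (s : ℕ)

/-- `λ_j = e_1 ⋯ e_r · ν_j`. -/
def lamJ (r : ℕ) (e h f : ℕ → ℕ) (j : Fin r → ℕ) : ℚ :=
  (∏ s ∈ Finset.range r, (e s : ℚ)) * nuJ r e h f j

/-- `J′ = { j ∈ ℕ^r : j_s < e_s for all s }`. -/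
def Jprime (r : ℕ) (e : ℕ → ℕ) : Set (Fin r → ℕ) :=
  {j | ∀ s : Fin r, j s < e (s : ℕ)}

namespace LamAux

/-- integer numerator `c_s = (e_0⋯e_s)·ν_s`. -/
def cc (e h f : ℕ → ℕ) (s : ℕ) : ℕ :=
  ∑ i ∈ Finset.range (s + 1),
    (∏ t ∈ Finset.Ico i s, e t * f t) * h i * ∏ t ∈ Finset.Ico (i + 1) (s + 1), e t

/-- partial weighted sums. -/
def S (e C : ℕ → ℕ) (m n : ℕ) (j : ℕ → ℕ) : ℕ :=
  ∑ i ∈ Finset.Ico m n, j i * (∏ t ∈ Finset.Ico (i + 1) n, e t) * C i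

/-- extension of a `Fin r`-tuple by zero. -/
def extF (r : ℕ) (j : Fin r → ℕ) : ℕ → ℕ := fun i => if hi : i < r then j ⟨i, hi⟩ else 0

lemma cc_eq (e h f : ℕ → ℕ) (s : ℕ) :
    ∃ d, cc e h f s = h s + e s * d := by
  refine ⟨∑ i ∈ Finset.range s,
    (∏ t ∈ Finset.Ico i s, e t * f t) * h i * ∏ t ∈ Finset.Ico (i + 1) s, e t, ?_⟩
  unfold cc
  rw [Finset.sum_range_succ, Finset.Ico_self, Finset.prod_empty, one_mul,
    show s + 1 + 0 = s + 1 from rfl, Finset.Ico_self, Finset.prod_empty, mul_one,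
    Finset.mul_sum]
  rw [add_comm]
  congr 1
  refine Finset.sum_congr rfl fun i hi => ?_
  have hi' : i < s := Finset.mem_range.mp hi
  rw [Finset.prod_Ico_succ_top (by omega : i + 1 ≤ s)]
  ring

lemma cc_coprime (e h f : ℕ → ℕ) (s : ℕ) (hc : Nat.Coprime (e s) (h s)) :
    Nat.Coprime (cc e h f s) (e s) := by
  obtain ⟨d, hd⟩ := cc_eq e h f s
  rw [hd]
  have : Nat.Coprime (e s) (h s + e s * d) := by
    simpa using (Nat.coprime_add_mul_right_right (e s) (h s) d).mpr hc
  exact this.symm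

lemma nuS_eq (e h f : ℕ → ℕ) (he : ∀ t, 0 < e t) (s : ℕ) :
    (∏ t ∈ Finset.range (s + 1), (e t : ℚ)) * nuS e h f s = (cc e h f s : ℚ) := by
  unfold nuS cc
  rw [Finset.mul_sum]
  push_cast
  refine Finset.sum_congr rfl fun i hi => ?_
  have his : i < s + 1 := Finset.mem_range.mp hi
  have hne : (∏ t ∈ Finset.range (i + 1), (e t : ℚ)) ≠ 0 :=
    Finset.prod_ne_zero_iff.mpr fun t _ => by exact_mod_cast (he t).ne'
  have hsplit : (∏ t ∈ Finset.range (i + 1), (e t : ℚ)) *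
      (∏ t ∈ Finset.Ico (i + 1) (s + 1), (e t : ℚ)) = ∏ t ∈ Finset.range (s + 1), (e t : ℚ) :=
    Finset.prod_range_mul_prod_Ico _ (by omega)
  rw [mul_div_assoc, ← hsplit]
  field_simp

lemma S_add (e C : ℕ → ℕ) (m n : ℕ) (a b : ℕ → ℕ) :
    S e C m n (fun i => a i + b i) = S e C m n a + S e C m n b := by
  unfold S
  rw [← Finset.sum_add_distrib]
  exact Finset.sum_congr rfl fun i _ => by ring

lemma S_congr (e C : ℕ → ℕ) (m n : ℕ) {a b : ℕ → ℕ}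
    (hab : ∀ i, m ≤ i → i < n → a i = b i) : S e C m n a = S e C m n b :=
  Finset.sum_congr rfl fun i hi => by
    obtain ⟨h1, h2⟩ := Finset.mem_Ico.mp hi; rw [hab i h1 h2]

lemma S_split (e C : ℕ → ℕ) {m p n : ℕ} (hmp : m ≤ p) (hpn : p ≤ n) (j : ℕ → ℕ) :
    S e C m n j ≡ S e C p n j [MOD ∏ t ∈ Finset.Ico p n, e t] := by
  unfold S
  rw [← Finset.sum_Ico_consecutive _ hmp hpn]
  have hdvd : (∏ t ∈ Finset.Ico p n, e t) ∣
      ∑ i ∈ Finset.Ico m p, j i * (∏ t ∈ Finset.Ico (i + 1) n, e t) * C i := by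
    refine Finset.dvd_sum fun i hi => ?_
    obtain ⟨_, hip⟩ := Finset.mem_Ico.mp hi
    have hsub : Finset.Ico p n ⊆ Finset.Ico (i + 1) n := by
      intro t ht; obtain ⟨h1, h2⟩ := Finset.mem_Ico.mp ht
      exact Finset.mem_Ico.mpr ⟨by omega, h2⟩
    exact ((Finset.prod_dvd_prod_of_subset _ _ _ hsub).mul_left (j i)).mul_right (C i)
  have h0 : (∑ i ∈ Finset.Ico m p, j i * (∏ t ∈ Finset.Ico (i + 1) n, e t) * C i) ≡ 0
      [MOD ∏ t ∈ Finset.Ico p n, e t] := Nat.modEq_zero_iff_dvd.mpr hdvd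
  simpa using h0.add_right (∑ i ∈ Finset.Ico p n, j i * (∏ t ∈ Finset.Ico (i + 1) n, e t) * C i)

lemma S_succ (e C : ℕ → ℕ) {m n : ℕ} (hmn : m ≤ n) (j : ℕ → ℕ) :
    S e C m (n + 1) j = e n * S e C m n j + j n * C n := by
  unfold S
  rw [Finset.sum_Ico_succ_top hmn]
  rw [Finset.Ico_self, Finset.prod_empty, mul_one, Finset.mul_sum]
  congr 1
  refine Finset.sum_congr rfl fun i hi => ?_
  obtain ⟨_, hin⟩ := Finset.mem_Ico.mp hi
  rw [Finset.prod_Ico_succ_top (by omega : i + 1 ≤ n)]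
  ring

lemma S_single (e C : ℕ → ℕ) (n : ℕ) (j : ℕ → ℕ) :
    S e C n (n + 1) j = j n * C n := by
  unfold S
  rw [Finset.sum_Ico_succ_top (le_refl _), Finset.Ico_self, Finset.sum_empty,
    Finset.Ico_self, Finset.prod_empty]
  ring

lemma cancel_coprime {a b c m : ℕ} (hm : 0 < m) (hg : Nat.Coprime c m)
    (hmod : a * c ≡ b * c [MOD m]) : a ≡ b [MOD m] := by
  have := hmod.cancel_right_div_gcd hm
  rwa [Nat.gcd_comm, Nat.Coprime.gcd_eq_one hg, Nat.div_one] at this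

lemma key (e C : ℕ → ℕ) (he : ∀ i, 0 < e i) (hcop : ∀ i, Nat.Coprime (C i) (e i)) (m : ℕ) :
    ∀ n (j j' : ℕ → ℕ), (∀ i, m ≤ i → i < n → j i < e i) → (∀ i, m ≤ i → i < n → j' i < e i) →
    S e C m n j ≡ S e C m n j' [MOD ∏ t ∈ Finset.Ico m n, e t] →
    ∀ i, m ≤ i → i < n → j i = j' i := by
  intro n
  induction n with
  | zero => intro _ _ _ _ _ i _ h; omega
  | succ n ih =>
    intro j j' hj hj' hmod i hmi hin
    have hmn : m ≤ n := by omega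
    have hen : (∏ t ∈ Finset.Ico n (n + 1), e t) = e n := by
      rw [Finset.prod_Ico_succ_top (le_refl n), Finset.Ico_self, Finset.prod_empty, one_mul]
    have hedvd : e n ∣ ∏ t ∈ Finset.Ico m (n + 1), e t :=
      Finset.dvd_prod_of_mem _ (Finset.mem_Ico.mpr ⟨hmn, by omega⟩)
    have htopj : S e C m (n + 1) j ≡ j n * C n [MOD e n] := by
      have := S_split e C hmn (Nat.le_succ n) j
      rw [hen, S_single] at this
      exact this
    have htopj' : S e C m (n + 1) j' ≡ j' n * C n [MOD e n] := by
      have := S_split e C hmn (Nat.le_succ n) j'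
      rw [hen, S_single] at this
      exact this
    have htop : j n = j' n := by
      have h1 : j n * C n ≡ j' n * C n [MOD e n] :=
        (htopj.symm.trans (hmod.of_dvd hedvd)).trans htopj'
      exact (cancel_coprime (he n) (hcop n) h1).eq_of_lt_of_lt
        (hj n hmn (by omega)) (hj' n hmn (by omega))
    rcases Nat.lt_succ_iff_lt_or_eq.mp hin with hin' | rfl
    · have hP : (∏ t ∈ Finset.Ico m (n + 1), e t) =
          (e n) * ∏ t ∈ Finset.Ico m n, e t := by
        rw [Finset.prod_Ico_succ_top hmn]; ring
      have h2 : e n * S e C m n j + j' n * C n ≡ e n * S e C m n j' + j' n * C n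
          [MOD e n * ∏ t ∈ Finset.Ico m n, e t] := by
        have := hmod
        rw [S_succ e C hmn j, S_succ e C hmn j', hP, htop] at this
        exact this
      have h3 : e n * S e C m n j ≡ e n * S e C m n j'
          [MOD e n * ∏ t ∈ Finset.Ico m n, e t] := h2.add_right_cancel' _
      have h4 := Nat.ModEq.mul_left_cancel' (he n).ne' h3
      exact ih j j' (fun i h1 h2 => hj i h1 (by omega)) (fun i h1 h2 => hj' i h1 (by omega))
        h4 i hmi hin'
    · exact htop

lemma lamJ_eq (r : ℕ) (e h f : ℕ → ℕ) (he : ∀ t, 0 < e t) (j : Fin r → ℕ) :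
    lamJ r e h f j = ((S e (cc e h f) 0 r (extF r j) : ℕ) : ℚ) := by
  have step1 : lamJ r e h f j
      = ∑ s : Fin r, (j s : ℚ) * ((∏ t ∈ Finset.Ico ((s : ℕ) + 1) r, (e t : ℚ)) *
          (cc e h f (s : ℕ) : ℚ)) := by
    unfold lamJ nuJ
    rw [Finset.mul_sum]
    refine Finset.sum_congr rfl fun s _ => ?_
    have hs : (s : ℕ) + 1 ≤ r := s.isLt
    rw [← nuS_eq e h f he (s : ℕ),
      ← Finset.prod_range_mul_prod_Ico (fun t => (e t : ℚ)) hs]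
    ring
  rw [step1]
  have step2 : ∑ s : Fin r, (j s : ℚ) * ((∏ t ∈ Finset.Ico ((s : ℕ) + 1) r, (e t : ℚ)) *
      (cc e h f (s : ℕ) : ℚ)) =
      ∑ i ∈ Finset.range r, (extF r j i : ℚ) * ((∏ t ∈ Finset.Ico (i + 1) r, (e t : ℚ)) *
      (cc e h f i : ℚ)) := by
    rw [← Fin.sum_univ_eq_sum_range (fun i => (extF r j i : ℚ) *
      ((∏ t ∈ Finset.Ico (i + 1) r, (e t : ℚ)) * (cc e h f i : ℚ))) r]
    refine Finset.sum_congr rfl fun s _ => ?_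
    simp [extF, s.isLt]
  rw [step2]
  unfold S
  rw [← Finset.range_eq_Ico]
  push_cast
  exact Finset.sum_congr rfl fun i _ => by ring

end LamAux

/-- The map `J′ → ℤ/(e_1⋯e_r)ℤ` sending `j′` to the class of `λ_{j′}` is a bijection;
in particular the fractional parts of the `ν_{j′}`, `j′ ∈ J′`, are pairwise distinct and
their set equals `{k/(e_1⋯e_r) : 0 ≤ k < e_1⋯e_r}`.  Consequently, for every
`k = (k_1,…,k_r) ∈ ℕ^r` there is a unique `j′ ∈ J′` such that `e_1⋯e_r` divides
`λ_{j′+(e_1k_1,…,e_rk_r)}`; this `j′` satisfies `j′_r = 0`, and for each `1 ≤ s < r` the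
coordinate `j′_s` depends only on `(k_{s+1},…,k_r)`. -/
theorem lamJ_bijective (r : ℕ) (hr : 1 ≤ r) (e h f : ℕ → ℕ)
    (he : ∀ s, 0 < e s) (hh : ∀ s, 0 < h s) (hf : ∀ s, 0 < f s)
    (hcop : ∀ s, Nat.Coprime (e s) (h s)) :
    Set.BijOn (fun j : Fin r → ℕ =>
        ((⌊lamJ r e h f j⌋ : ℤ) : ZMod (∏ s ∈ Finset.range r, e s)))
      (Jprime r e) Set.univ ∧
    Set.InjOn (fun j : Fin r → ℕ => Int.fract (nuJ r e h f j)) (Jprime r e) ∧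
    (fun j : Fin r → ℕ => Int.fract (nuJ r e h f j)) '' (Jprime r e) =
      {q : ℚ | ∃ k : ℕ, k < ∏ s ∈ Finset.range r, e s ∧
        q = (k : ℚ) / ((∏ s ∈ Finset.range r, e s : ℕ) : ℚ)} ∧
    ∃ J : (Fin r → ℕ) → (Fin r → ℕ),
      (∀ k : Fin r → ℕ,
        J k ∈ Jprime r e ∧
        (∃ n : ℤ, lamJ r e h f (fun s => J k s + e (s : ℕ) * k s) =
          (n : ℚ) * ((∏ s ∈ Finset.range r, e s : ℕ) : ℚ)) ∧
        (∀ j' ∈ Jprime r e,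
          (∃ n : ℤ, lamJ r e h f (fun s => j' s + e (s : ℕ) * k s) =
            (n : ℚ) * ((∏ s ∈ Finset.range r, e s : ℕ) : ℚ)) → j' = J k) ∧
        J k ⟨r - 1, by omega⟩ = 0) ∧
      (∀ s : Fin r, (s : ℕ) + 1 < r → ∀ k k' : Fin r → ℕ,
        (∀ t : Fin r, (s : ℕ) < (t : ℕ) → k t = k' t) → J k s = J k' s) := by
  classical
  have hEpos : 0 < ∏ s ∈ Finset.range r, e s := Finset.prod_pos fun s _ => he s
  set C := LamAux.cc e h f with hCdef
  set E := ∏ s ∈ Finset.range r, e s with hEdef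
  haveI : NeZero E := ⟨hEpos.ne'⟩
  have hcopC : ∀ s, Nat.Coprime (C s) (e s) := fun s => LamAux.cc_coprime e h f s (hcop s)
  have hrange : (∏ t ∈ Finset.Ico 0 r, e t) = E := by rw [hEdef, Finset.range_eq_Ico]
  set N : (Fin r → ℕ) → ℕ := fun j => LamAux.S e C 0 r (LamAux.extF r j) with hNdef
  have hlam : ∀ j : Fin r → ℕ, lamJ r e h f j = ((N j : ℕ) : ℚ) :=
    fun j => LamAux.lamJ_eq r e h f he j
  have hfloor : ∀ j : Fin r → ℕ, (⌊lamJ r e h f j⌋ : ℤ) = (N j : ℤ) := by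
    intro j; rw [hlam j]; exact_mod_cast Int.floor_natCast _
  have hbound : ∀ j, j ∈ Jprime r e → ∀ i, 0 ≤ i → i < r → LamAux.extF r j i < e i := by
    intro j hj i _ hi; simpa [LamAux.extF, hi] using hj ⟨i, hi⟩
  have hinjN : ∀ j ∈ Jprime r e, ∀ j' ∈ Jprime r e, N j ≡ N j' [MOD E] → j = j' := by
    intro j hj j' hj' hmod
    have hkey := LamAux.key e C he hcopC 0 r (LamAux.extF r j) (LamAux.extF r j')
      (hbound j hj) (hbound j' hj') (by rwa [hrange])
    funext s
    have := hkey s.1 (Nat.zero_le _) s.isLt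
    simpa [LamAux.extF, s.isLt] using this
  have hinjZ : Set.InjOn (fun j : Fin r → ℕ => ((N j : ℕ) : ZMod E)) (Jprime r e) := by
    intro j hj j' hj' hzm
    exact hinjN j hj j' hj' ((ZMod.natCast_eq_natCast_iff _ _ _).mp hzm)
  set Jf : Finset (Fin r → ℕ) := Fintype.piFinset (fun s => Finset.range (e s)) with hJfdef
  have hJfset : (↑Jf : Set (Fin r → ℕ)) = Jprime r e := by
    ext j; simp [hJfdef, Fintype.mem_piFinset, Jprime, Set.mem_setOf_eq]
  have hJfcard : Jf.card = E := by
    rw [hJfdef, Fintype.card_piFinset]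
    simp only [Finset.card_range]
    rw [hEdef]
    exact Fin.prod_univ_eq_prod_range (fun i => e i) r
  have himg : Finset.image (fun j : Fin r → ℕ => ((N j : ℕ) : ZMod E)) Jf = Finset.univ := by
    apply Finset.eq_univ_of_card
    rw [Finset.card_image_of_injOn (by rw [hJfset]; exact hinjZ), hJfcard, ZMod.card]
  have hsurjZ : ∀ z : ZMod E, ∃ j ∈ Jprime r e, ((N j : ℕ) : ZMod E) = z := by
    intro z
    have hz : z ∈ Finset.image (fun j : Fin r → ℕ => ((N j : ℕ) : ZMod E)) Jf := by
      rw [himg]; exact Finset.mem_univ z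
    obtain ⟨j, hj, hjz⟩ := Finset.mem_image.mp hz
    exact ⟨j, hJfset ▸ Finset.mem_coe.mpr hj, hjz⟩
  have hEQ : ((E : ℕ) : ℚ) = ∏ s ∈ Finset.range r, (e s : ℚ) := by
    rw [hEdef]; push_cast; rfl
  have hEQ0 : ((E : ℕ) : ℚ) ≠ 0 := by exact_mod_cast hEpos.ne'
  have hnuJ : ∀ j : Fin r → ℕ, nuJ r e h f j = ((N j : ℕ) : ℚ) / (E : ℚ) := by
    intro j
    have h2 : ((E : ℕ) : ℚ) * nuJ r e h f j = ((N j : ℕ) : ℚ) := by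
      rw [hEQ, ← hlam j]; rfl
    rw [eq_div_iff hEQ0, mul_comm]
    exact h2
  have hfract : ∀ j : Fin r → ℕ,
      Int.fract (nuJ r e h f j) = ((N j % E : ℕ) : ℚ) / (E : ℚ) := by
    intro j
    have hsplitq : ((N j : ℕ) : ℚ) / (E : ℚ) =
        ((N j / E : ℕ) : ℚ) + ((N j % E : ℕ) : ℚ) / (E : ℚ) := by
      have hNE : ((N j : ℕ) : ℚ) = ((N j / E : ℕ) : ℚ) * (E : ℚ) + ((N j % E : ℕ) : ℚ) := by
        exact_mod_cast (Nat.div_add_mod' (N j) E).symm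
      rw [hNE, add_div, mul_div_cancel_right₀ _ hEQ0]
    rw [hnuJ j, hsplitq,
      (Int.cast_natCast (N j / E)).symm,
      Int.fract_intCast_add,
      Int.fract_eq_self.mpr ⟨by positivity, by
        rw [div_lt_one (by exact_mod_cast hEpos)]
        exact_mod_cast Nat.mod_lt _ hEpos⟩]
  have hmodinj : ∀ j ∈ Jprime r e, ∀ j' ∈ Jprime r e, N j % E = N j' % E → j = j' := by
    intro j hj j' hj' hmm
    exact hinjN j hj j' hj' hmm
  refine ⟨?_, ?_, ?_, ?_⟩
  · -- BijOn
    have hfun : (fun j : Fin r → ℕ => ((⌊lamJ r e h f j⌋ : ℤ) : ZMod E)) =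
        fun j : Fin r → ℕ => ((N j : ℕ) : ZMod E) := by
      funext j; rw [hfloor j]; push_cast; rfl
    rw [hfun]
    exact ⟨fun j _ => Set.mem_univ _, hinjZ, fun z _ => by
      obtain ⟨j, hj, hjz⟩ := hsurjZ z
      exact ⟨j, hj, hjz⟩⟩
  · -- InjOn fract
    intro j hj j' hj' hq
    simp only at hq
    rw [hfract j, hfract j'] at hq
    have hmm : (N j % E : ℕ) = N j' % E := by
      have h2 : ((N j % E : ℕ) : ℚ) = ((N j' % E : ℕ) : ℚ) := by
        have h3 := congrArg (fun x : ℚ => x * (E : ℚ)) hq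
        simpa [div_mul_cancel₀, hEQ0] using h3
      exact_mod_cast h2
    exact hmodinj j hj j' hj' hmm
  · -- image of fract
    ext q
    simp only [Set.mem_image, Set.mem_setOf_eq]
    constructor
    · rintro ⟨j, hj, rfl⟩
      exact ⟨N j % E, Nat.mod_lt _ hEpos, (hfract j)⟩
    · rintro ⟨k, hk, rfl⟩
      obtain ⟨j, hj, hjz⟩ := hsurjZ ((k : ZMod E))
      refine ⟨j, hj, ?_⟩
      rw [hfract j]
      have hmk : N j % E = k := by
        have := (ZMod.natCast_eq_natCast_iff' _ _ _).mp hjz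
        rwa [Nat.mod_eq_of_lt hk] at this
      rw [hmk]
  · -- the function J
    set ek : (Fin r → ℕ) → ℕ → ℕ :=
      fun k => LamAux.extF r (fun s => e (s : ℕ) * k s) with hekdef
    have hsum : ∀ j k : Fin r → ℕ, LamAux.extF r (fun s => j s + e (s : ℕ) * k s) =
        fun i => LamAux.extF r j i + ek k i := by
      intro j k; funext i
      by_cases hi : i < r <;> simp [LamAux.extF, hekdef, hi]
    have hNfull : ∀ j k : Fin r → ℕ,
        N (fun s => j s + e (s : ℕ) * k s) = N j + LamAux.S e C 0 r (ek k) := by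
      intro j k
      show LamAux.S e C 0 r (LamAux.extF r (fun s => j s + e (s : ℕ) * k s)) = _
      rw [hsum j k, LamAux.S_add]
    have hdvd_iff : ∀ j k : Fin r → ℕ,
        (∃ n : ℤ, lamJ r e h f (fun s => j s + e (s : ℕ) * k s) = (n : ℚ) * ((E : ℕ) : ℚ)) ↔
          E ∣ (N j + LamAux.S e C 0 r (ek k)) := by
      intro j k
      rw [hlam (fun s => j s + e (s : ℕ) * k s), hNfull j k]
      constructor
      · rintro ⟨n, hn⟩
        have h2 : ((N j + LamAux.S e C 0 r (ek k) : ℕ) : ℤ) = n * (E : ℤ) := by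
          exact_mod_cast hn
        exact Int.ofNat_dvd.mp ⟨n, by rw [h2]; ring⟩
      · rintro ⟨d, hd⟩
        refine ⟨d, ?_⟩
        rw [hd]; push_cast; ring
    have hex : ∀ k : Fin r → ℕ, ∃ j, j ∈ Jprime r e ∧
        E ∣ (N j + LamAux.S e C 0 r (ek k)) := by
      intro k
      obtain ⟨j, hj, hjz⟩ := hsurjZ (-(((LamAux.S e C 0 r (ek k) : ℕ)) : ZMod E))
      refine ⟨j, hj, ?_⟩
      have hz : (((N j + LamAux.S e C 0 r (ek k) : ℕ)) : ZMod E) = 0 := by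
        push_cast
        rw [hjz]; ring
      exact (ZMod.natCast_eq_zero_iff _ _).mp hz
    choose Jfun hJmem hJdvd using hex
    refine ⟨Jfun, fun k => ⟨hJmem k, ?_, ?_, ?_⟩, ?_⟩
    · exact (hdvd_iff (Jfun k) k).mpr (hJdvd k)
    · intro j' hj' hn
      have h1 := (hdvd_iff j' k).mp hn
      have h2 := hJdvd k
      have h3 : N j' + LamAux.S e C 0 r (ek k) ≡ N (Jfun k) + LamAux.S e C 0 r (ek k)
          [MOD E] := (Nat.modEq_zero_iff_dvd.mpr h1).trans
            (Nat.modEq_zero_iff_dvd.mpr h2).symm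
      exact hinjN j' hj' (Jfun k) (hJmem k) (h3.add_right_cancel' _)
    · -- last coordinate is zero
      have hpr : r - 1 < r := by omega
      set p := r - 1 with hpdef
      have hprr : p + 1 = r := by omega
      set full : ℕ → ℕ := LamAux.extF r (fun s => Jfun k s + e (s : ℕ) * k s) with hfulldef
      have hSfull : LamAux.S e C 0 r full = N (Jfun k) + LamAux.S e C 0 r (ek k) :=
        hNfull (Jfun k) k
      have hep : e p ∣ E := hEdef ▸ Finset.dvd_prod_of_mem _ (Finset.mem_range.mpr hpr)
      have hIco : (∏ t ∈ Finset.Ico p r, e t) = e p := by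
        rw [← hprr, Finset.prod_Ico_succ_top (le_refl p), Finset.Ico_self,
          Finset.prod_empty, one_mul]
      have hSp : LamAux.S e C p r full = full p * C p := by
        rw [← hprr, LamAux.S_single]
      have hstep : LamAux.S e C 0 r full ≡ full p * C p [MOD e p] := by
        have h1 := LamAux.S_split e C (Nat.zero_le p) (le_of_lt hpr) full
        rw [hIco, hSp] at h1
        exact h1
      have h0 : full p * C p ≡ 0 [MOD e p] := by
        have hE0 : LamAux.S e C 0 r full ≡ 0 [MOD e p] :=
          Nat.modEq_zero_iff_dvd.mpr (hep.trans (hSfull ▸ hJdvd k))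
        exact hstep.symm.trans hE0
      have hfp : full p = Jfun k ⟨p, hpr⟩ + e p * k ⟨p, hpr⟩ := by
        simp [hfulldef, LamAux.extF, hpr]
      have h1 : Jfun k ⟨p, hpr⟩ * C p ≡ 0 [MOD e p] := by
        have h2 : full p ≡ Jfun k ⟨p, hpr⟩ [MOD e p] := by
          rw [hfp]
          exact Nat.add_mul_mod_self_left (Jfun k ⟨p, hpr⟩) (e p) (k ⟨p, hpr⟩)
        exact (h2.mul_right (C p)).symm.trans h0
      have h3 : e p ∣ Jfun k ⟨p, hpr⟩ :=
        ((hcopC p).symm).dvd_of_dvd_mul_right (Nat.modEq_zero_iff_dvd.mp h1)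
      exact Nat.eq_zero_of_dvd_of_lt h3 (hJmem k ⟨p, hpr⟩)
    · -- dependence on the tail of k only
      intro s hs k k' hkk
      set p := (s : ℕ) with hpdef
      have hpr : p < r := s.isLt
      set M := ∏ t ∈ Finset.Ico p r, e t with hMdef
      have hME : M ∣ E := by
        rw [hEdef, ← Finset.prod_range_mul_prod_Ico e (le_of_lt hpr)]
        exact dvd_mul_left _ _
      have hMeq : M = e p * ∏ t ∈ Finset.Ico (p + 1) r, e t := by
        rw [hMdef, Finset.prod_eq_prod_Ico_succ_bot hpr]
      have hrel : ∀ kk : Fin r → ℕ,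
          LamAux.S e C p r (LamAux.extF r (Jfun kk)) + LamAux.S e C (p + 1) r (ek kk) ≡ 0
            [MOD M] := by
        intro kk
        have h1 : LamAux.S e C 0 r
            (LamAux.extF r (fun t => Jfun kk t + e (t : ℕ) * kk t)) ≡ 0 [MOD M] :=
          Nat.modEq_zero_iff_dvd.mpr (hME.trans (by
            have hdd : E ∣ N (fun t => Jfun kk t + e (t : ℕ) * kk t) := by
              rw [hNfull (Jfun kk) kk]; exact hJdvd kk
            exact hdd))
        have h2 := LamAux.S_split e C (Nat.zero_le p) (le_of_lt hpr)
          (LamAux.extF r (fun t => Jfun kk t + e (t : ℕ) * kk t))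
        rw [← hMdef] at h2
        have h3 : LamAux.S e C p r (LamAux.extF r (fun t => Jfun kk t + e (t : ℕ) * kk t)) =
            LamAux.S e C p r (LamAux.extF r (Jfun kk)) + LamAux.S e C p r (ek kk) := by
          rw [hsum (Jfun kk) kk, LamAux.S_add]
        have h4 : LamAux.S e C p r (ek kk) ≡ LamAux.S e C (p + 1) r (ek kk) [MOD M] := by
          have h5 : LamAux.S e C p r (ek kk) =
              kk ⟨p, hpr⟩ * M * C p + LamAux.S e C (p + 1) r (ek kk) := by
            unfold LamAux.S
            rw [Finset.sum_eq_sum_Ico_succ_bot hpr]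
            have hekp : ek kk p = e p * kk ⟨p, hpr⟩ := by
              simp [hekdef, LamAux.extF, hpr]
            rw [hekp, hMeq]; ring
          rw [h5]
          have h6 : kk ⟨p, hpr⟩ * M * C p ≡ 0 [MOD M] :=
            Nat.modEq_zero_iff_dvd.mpr ⟨kk ⟨p, hpr⟩ * C p, by ring⟩
          simpa using h6.add_right (LamAux.S e C (p + 1) r (ek kk))
        calc LamAux.S e C p r (LamAux.extF r (Jfun kk)) + LamAux.S e C (p + 1) r (ek kk)
            ≡ LamAux.S e C p r (LamAux.extF r (Jfun kk)) + LamAux.S e C p r (ek kk)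
              [MOD M] := h4.symm.add_left _
          _ = LamAux.S e C p r (LamAux.extF r (fun t => Jfun kk t + e (t : ℕ) * kk t)) :=
              h3.symm
          _ ≡ LamAux.S e C 0 r (LamAux.extF r (fun t => Jfun kk t + e (t : ℕ) * kk t))
              [MOD M] := h2.symm
          _ ≡ 0 [MOD M] := h1
      have hDeq : LamAux.S e C (p + 1) r (ek k) = LamAux.S e C (p + 1) r (ek k') := by
        refine LamAux.S_congr e C (p + 1) r fun i h1 h2 => ?_
        simp only [hekdef, LamAux.extF]
        rw [dif_pos h2, dif_pos h2, hkk ⟨i, h2⟩ (by simp only [Fin.val_mk]; omega)]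
      have hcongr : LamAux.S e C p r (LamAux.extF r (Jfun k)) ≡
          LamAux.S e C p r (LamAux.extF r (Jfun k')) [MOD M] := by
        have ha := hrel k
        have hb := hrel k'
        rw [hDeq] at ha
        exact ((ha.trans hb.symm).add_right_cancel' _)
      have hkey := LamAux.key e C he hcopC p r (LamAux.extF r (Jfun k))
        (LamAux.extF r (Jfun k'))
        (fun i h1 h2 => hbound _ (hJmem k) i (Nat.zero_le _) h2)
        (fun i h1 h2 => hbound _ (hJmem k') i (Nat.zero_le _) h2)
        (by rw [← hMdef]; exact hcongr)
      have hfin := hkey p (le_refl p) hpr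
      simpa [LamAux.extF, hpr] using hfin
end
end
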